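/- arXiv:1511.06981 — 7 statements merged into one kernel-verified Lean document; each statement's English description precedes it below -/
import Mathlib

section
/- Let L ≥ 1 and let p ∈ ℝ^L with p(j) > 0 for all j and Σ_{j=1}^L p(j) = 1. If ρ : ℝ^L → ℝ satisfies (A1) convexity: ρ(λZ + (1−λ)W) ≤ λρ(Z) + (1−λ)ρ(W) for all λ ∈ [0,1] and Z, W ∈ ℝ^L; (A2) monotonicity: Z ≤ W componentwise implies ρ(Z) ≤ ρ(W); (A3) translation invariance: ρ(Z + a·𝟙) = ρ(Z) + a for all a ∈ ℝ; and (A4) positive homogeneity: ρ(λZ) = λρ(Z) for all λ ≥ 0; then there exists a nonempty compact convex set U ⊆ Δ^L such that ρ(Z) = max_{q ∈ U} Σ_{j=1}^L q(j) Z(j) for every Z ∈ ℝ^L. -/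
/-!
Convexity and positive homogeneity make `ρ` sublinear, so by Hahn–Banach every `Z` admits a
linear functional `q ⬝ᵥ ·` lying below `ρ` and touching it at `Z`. Hence `ρ` is the pointwise
maximum over the set `U` of all `q` with `q ⬝ᵥ · ≤ ρ`. This set is an intersection of closed
half-spaces, hence closed and convex; testing it against `-eⱼ` and the constants `±𝟙`, monotonicity
and `ρ (a • 𝟙) = a` put it inside the simplex, which makes it compact.
-/

open Matrix

section Sublinear

variable {E : Type*} [AddCommGroup E] [Module ℝ E] {ρ : E → ℝ}

theorem add_le_of_convexOn_of_homogeneous (hconv : ConvexOn ℝ Set.univ ρ)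
    (hhom : ∀ c : ℝ, 0 < c → ∀ x, ρ (c • x) = c * ρ x) (x y : E) :
    ρ (x + y) ≤ ρ x + ρ y := by
  have hmid := hconv.2 (Set.mem_univ x) (Set.mem_univ y) (by norm_num : (0 : ℝ) ≤ 1 / 2)
    (by norm_num : (0 : ℝ) ≤ 1 / 2) (by norm_num)
  have hxy : x + y = (2 : ℝ) • ((1 / 2 : ℝ) • x + (1 / 2 : ℝ) • y) := by
    rw [smul_add, smul_smul, smul_smul]; norm_num
  rw [hxy, hhom 2 two_pos]
  simp only [smul_eq_mul] at hmid
  linarith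

theorem exists_linearMap_le_eq_of_sublinear
    (hhom : ∀ c : ℝ, 0 < c → ∀ x, ρ (c • x) = c * ρ x) (hadd : ∀ x y, ρ (x + y) ≤ ρ x + ρ y)
    (x : E) : ∃ g : E →ₗ[ℝ] ℝ, (∀ y, g y ≤ ρ y) ∧ g x = ρ x := by
  have hρ0 : ρ 0 = 0 := by
    have := hhom 2 two_pos 0
    rw [smul_zero] at this
    linarith
  have hhom₀ : ∀ c : ℝ, 0 ≤ c → ∀ y, ρ (c • y) = c * ρ y := by
    intro c hc y
    rcases hc.eq_or_lt with rfl | hc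
    · rw [zero_smul, zero_mul, hρ0]
    · exact hhom c hc y
  have hwd : ∀ c : ℝ, c • x = 0 → c • ρ x = 0 := by
    intro c hc
    rcases smul_eq_zero.1 hc with rfl | rfl
    · exact zero_smul _ _
    · rw [hρ0, smul_zero]
  let f : E →ₗ.[ℝ] ℝ := LinearPMap.mkSpanSingleton' x (ρ x) hwd
  have hfle : ∀ y : f.domain, f y ≤ ρ y := by
    rintro ⟨y, hy⟩
    obtain ⟨c, rfl⟩ := Submodule.mem_span_singleton.1 hy
    rw [LinearPMap.mkSpanSingleton'_apply, RingHom.id_apply, smul_eq_mul]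
    rcases le_total 0 c with hc | hc
    · rw [hhom₀ c hc]
    · have h := hadd (c • x) ((-c) • x)
      rw [← add_smul, add_neg_cancel, zero_smul, hρ0, hhom₀ (-c) (neg_nonneg.2 hc)] at h
      linarith
  obtain ⟨g, hgf, hgle⟩ := exists_extension_of_le_sublinear f ρ hhom hadd hfle
  refine ⟨g, hgle, ?_⟩
  have hx : x ∈ f.domain := Submodule.mem_span_singleton_self x
  rw [hgf ⟨x, hx⟩, LinearPMap.mkSpanSingleton'_apply_self]

end Sublinear

theorem LinearMap.apply_eq_dotProduct {n : Type*} [Fintype n] [DecidableEq n]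
    (g : (n → ℝ) →ₗ[ℝ] ℝ) (Z : n → ℝ) : g Z = (fun j => g (Pi.single j 1)) ⬝ᵥ Z := by
  rw [LinearMap.pi_apply_eq_sum_univ g Z, dotProduct]
  refine Finset.sum_congr rfl fun i _ => ?_
  rw [smul_eq_mul, mul_comm]
  congr 2
  ext j
  simp [Pi.single_apply, eq_comm]

section RiskEnvelope

variable {n : Type*} [Fintype n]

def riskEnvelope (ρ : (n → ℝ) → ℝ) : Set (n → ℝ) :=
  ⋂ Z, {q | q ⬝ᵥ Z ≤ ρ Z}

variable {ρ : (n → ℝ) → ℝ}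

theorem mem_riskEnvelope {q : n → ℝ} : q ∈ riskEnvelope ρ ↔ ∀ Z, q ⬝ᵥ Z ≤ ρ Z :=
  Set.mem_iInter

theorem isClosed_riskEnvelope : IsClosed (riskEnvelope ρ) :=
  isClosed_iInter fun Z => isClosed_le (by fun_prop) continuous_const

theorem convex_riskEnvelope : Convex ℝ (riskEnvelope ρ) :=
  convex_iInter fun Z => convex_halfSpace_le ((dotProductBilin ℝ ℝ).flip Z).isLinear (ρ Z)

theorem riskEnvelope_subset_stdSimplex (hmono : Monotone ρ)
    (hconst : ∀ a : ℝ, ρ (fun _ => a) = a) : riskEnvelope ρ ⊆ stdSimplex ℝ n := by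
  classical
  intro q hq
  rw [mem_riskEnvelope] at hq
  refine ⟨fun j => ?_, ?_⟩
  · have h := (hq (-Pi.single j 1)).trans (hmono (neg_nonpos.2 (Pi.single_nonneg.2 zero_le_one)))
    have hρ0 : ρ 0 = 0 := hconst 0
    rw [dotProduct_neg, dotProduct_single, mul_one, hρ0] at h
    linarith
  · have hup := hq fun _ => 1
    have hlow := hq fun _ => -1
    rw [hconst] at hup hlow
    simp only [dotProduct, mul_one, mul_neg, Finset.sum_neg_distrib] at hup hlow
    linarith

theorem isCompact_riskEnvelope (hmono : Monotone ρ) (hconst : ∀ a : ℝ, ρ (fun _ => a) = a) :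
    IsCompact (riskEnvelope ρ) :=
  (isCompact_stdSimplex ℝ n).of_isClosed_subset isClosed_riskEnvelope
    (riskEnvelope_subset_stdSimplex hmono hconst)

theorem isGreatest_dotProduct_riskEnvelope
    (hhom : ∀ c : ℝ, 0 < c → ∀ x, ρ (c • x) = c * ρ x) (hadd : ∀ x y, ρ (x + y) ≤ ρ x + ρ y)
    (Z : n → ℝ) : IsGreatest ((· ⬝ᵥ Z) '' riskEnvelope ρ) (ρ Z) := by
  classical
  refine ⟨?_, ?_⟩
  · obtain ⟨g, hgle, hgZ⟩ := exists_linearMap_le_eq_of_sublinear hhom hadd Z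
    refine ⟨fun j => g (Pi.single j 1), mem_riskEnvelope.2 fun W => ?_, ?_⟩
    · exact (g.apply_eq_dotProduct W).symm.trans_le (hgle W)
    · exact (g.apply_eq_dotProduct Z).symm.trans hgZ
  · rintro _ ⟨q, hq, rfl⟩
    exact mem_riskEnvelope.1 hq Z

end RiskEnvelope

theorem stmt_0_general (L : ℕ)
    (ρ : (Fin L → ℝ) → ℝ)
    (hA1 : ∀ (lam : ℝ) (Z W : Fin L → ℝ), 0 ≤ lam → lam ≤ 1 →
      ρ (lam • Z + (1 - lam) • W) ≤ lam * ρ Z + (1 - lam) * ρ W)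
    (hA2 : ∀ Z W : Fin L → ℝ, (∀ j, Z j ≤ W j) → ρ Z ≤ ρ W)
    (hA3 : ∀ (a : ℝ) (Z : Fin L → ℝ), ρ (fun j => Z j + a) = ρ Z + a)
    (hA4 : ∀ (lam : ℝ) (Z : Fin L → ℝ), 0 ≤ lam → ρ (lam • Z) = lam * ρ Z) :
    ∃ U : Set (Fin L → ℝ), U.Nonempty ∧ IsCompact U ∧ Convex ℝ U ∧
      U ⊆ stdSimplex ℝ (Fin L) ∧
      ∀ Z : Fin L → ℝ, IsGreatest ((fun q => ∑ j, q j * Z j) '' U) (ρ Z) := by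
  have hmono : Monotone ρ := fun Z W => hA2 Z W
  have hconst : ∀ a : ℝ, ρ (fun _ => a) = a := by
    intro a
    have hρ0 : ρ 0 = 0 := by simpa using hA4 0 0 le_rfl
    simpa [hρ0] using hA3 a 0
  have hconv : ConvexOn ℝ Set.univ ρ := by
    refine ⟨convex_univ, fun Z _ W _ a b ha hb hab => ?_⟩
    obtain rfl : b = 1 - a := by linarith
    exact hA1 a Z W ha (by linarith)
  have hhom : ∀ c : ℝ, 0 < c → ∀ Z, ρ (c • Z) = c * ρ Z := fun c hc Z => hA4 c Z hc.le
  have hgreatest := isGreatest_dotProduct_riskEnvelope hhom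
    (add_le_of_convexOn_of_homogeneous hconv hhom)
  exact ⟨riskEnvelope ρ, Set.image_nonempty.1 ⟨_, (hgreatest 0).1⟩,
    isCompact_riskEnvelope hmono hconst, convex_riskEnvelope,
    riskEnvelope_subset_stdSimplex hmono hconst, hgreatest⟩

/-- Representation theorem for coherent risk measures on finite probability spaces. -/
theorem stmt_0 (L : ℕ) (hL : 1 ≤ L) (p : Fin L → ℝ)
    (hp_pos : ∀ j, 0 < p j) (hp_sum : ∑ j, p j = 1)
    (ρ : (Fin L → ℝ) → ℝ)
    (hA1 : ∀ (lam : ℝ) (Z W : Fin L → ℝ), 0 ≤ lam → lam ≤ 1 →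
      ρ (lam • Z + (1 - lam) • W) ≤ lam * ρ Z + (1 - lam) * ρ W)
    (hA2 : ∀ Z W : Fin L → ℝ, (∀ j, Z j ≤ W j) → ρ Z ≤ ρ W)
    (hA3 : ∀ (a : ℝ) (Z : Fin L → ℝ), ρ (fun j => Z j + a) = ρ Z + a)
    (hA4 : ∀ (lam : ℝ) (Z : Fin L → ℝ), 0 ≤ lam → ρ (lam • Z) = lam * ρ Z) :
    ∃ U : Set (Fin L → ℝ), U.Nonempty ∧ IsCompact U ∧ Convex ℝ U ∧
      U ⊆ stdSimplex ℝ (Fin L) ∧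
      ∀ Z : Fin L → ℝ, IsGreatest ((fun q => ∑ j, q j * Z j) '' U) (ρ Z) :=
  stmt_0_general L ρ hA1 hA2 hA3 hA4
end

section
/- Let Ω be a finite set equipped with a σ-algebra 𝓕, let N ≥ 1, and let 𝒢_0 ⊆ 𝒢_1 ⊆ ⋯ ⊆ 𝒢_N ⊆ 𝓕 be a filtration of σ-algebras on Ω. For each k ∈ {0,…,N−1} let ρ_k : (Ω → ℝ) → (Ω → ℝ) be a map satisfying: (i) monotonicity: Z ≤ W pointwise implies ρ_k(Z) ≤ ρ_k(W) pointwise; and (ii) translation invariance: ρ_k(Z + W) = Z + ρ_k(W) pointwise whenever Z is 𝒢_k-measurable. For adapted sequences (Z_k,…,Z_N) (each Z_i being 𝒢_i-measurable), define ρ_{k,N}(Z_k,…,Z_N) := Z_k + ρ_k(Z_{k+1} + ρ_{k+1}(Z_{k+2} + ⋯ + ρ_{N−2}(Z_{N−1} + ρ_{N−1}(Z_N))⋯)). Then the family {ρ_{k,N}} is time-consistent: for all 0 ≤ l < k ≤ N and all adapted sequences (Z_l,…,Z_N) and (W_l,…,W_N), if Z_i = W_i for all i ∈ {l,…,k−1}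 and ρ_{k,N}(Z_k,…,Z_N) ≤ ρ_{k,N}(W_k,…,W_N) pointwise, then ρ_{l,N}(Z_l,…,Z_N) ≤ ρ_{l,N}(W_l,…,W_N) pointwise. -/
/-- The nested composition `ρ_{k,N}` of one-step conditional risk measures:
`riskComp ρ Z d k` is `Z_k + ρ_k(Z_{k+1} + ρ_{k+1}( ⋯ ))` with `d` remaining stages,
so that `ρ_{k,N} = riskComp ρ Z (N - k) k`. -/
def riskComp {Ω : Type*} (ρ : ℕ → (Ω → ℝ) → (Ω → ℝ)) (Z : ℕ → Ω → ℝ) :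
    ℕ → ℕ → (Ω → ℝ)
  | 0, k => Z k
  | d + 1, k => Z k + ρ k (riskComp ρ Z d (k + 1))

/-- Compositions of monotone, translation-invariant one-step conditional risk measures
are time-consistent (Theorem 3 / equation (6) of the paper). -/
theorem stmt_3 {Ω : Type*} [Fintype Ω] (F : MeasurableSpace Ω) (N : ℕ) (hN : 1 ≤ N)
    (G : ℕ → MeasurableSpace Ω)
    (hGmono : ∀ i j, i ≤ j → j ≤ N → G i ≤ G j)
    (hGF : ∀ k, k ≤ N → G k ≤ F)
    (ρ : ℕ → (Ω → ℝ) → (Ω → ℝ))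
    (hmon : ∀ k, k < N → ∀ Z W : Ω → ℝ, (∀ ω, Z ω ≤ W ω) → ∀ ω, ρ k Z ω ≤ ρ k W ω)
    (htrans : ∀ k, k < N → ∀ Z W : Ω → ℝ, @Measurable Ω ℝ (G k) _ Z → ρ k (Z + W) = Z + ρ k W)
    (l k : ℕ) (hlk : l < k) (hkN : k ≤ N)
    (Z W : ℕ → Ω → ℝ)
    (hZad : ∀ i, l ≤ i → i ≤ N → @Measurable Ω ℝ (G i) _ (Z i))
    (hWad : ∀ i, l ≤ i → i ≤ N → @Measurable Ω ℝ (G i) _ (W i))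
    (heq : ∀ i, l ≤ i → i < k → Z i = W i)
    (hk : ∀ ω, riskComp ρ Z (N - k) k ω ≤ riskComp ρ W (N - k) k ω) :
    ∀ ω, riskComp ρ Z (N - l) l ω ≤ riskComp ρ W (N - l) l ω := by
  have key : ∀ n, n ≤ k - l →
      ∀ ω, riskComp ρ Z (N - (k - n)) (k - n) ω ≤ riskComp ρ W (N - (k - n)) (k - n) ω := by
    intro n
    induction n with
    | zero => simpa using hk
    | succ n ih =>
      intro hn ω
      have hn' : n ≤ k - l := Nat.le_of_succ_le hn
      set m := k - (n + 1) with hm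
      have hlm : l ≤ m := Nat.le_sub_of_add_le (by omega)
      have hmk : m < k := by omega
      have hms : k - n = m + 1 := by omega
      have hmN : m < N := lt_of_lt_of_le hmk hkN
      have hNm : N - m = (N - (m + 1)) + 1 := by omega
      have hZ : riskComp ρ Z (N - m) m = Z m + ρ m (riskComp ρ Z (N - (m + 1)) (m + 1)) := by
        rw [hNm]; rfl
      have hW : riskComp ρ W (N - m) m = W m + ρ m (riskComp ρ W (N - (m + 1)) (m + 1)) := by
        rw [hNm]; rfl
      have ih' := ih hn'
      rw [hms] at ih'
      have hmon' := hmon m hmN _ _ ih' ω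
      rw [hZ, hW, heq m hlm hmk]
      simpa using add_le_add_left hmon' (W m ω)
  have := key (k - l) le_rfl
  have hkl : k - (k - l) = l := by omega
  rwa [hkl] at this
end

section
/- Let L ≥ 1, let U ⊆ Δ^L be a nonempty compact convex set, and let ρ(Z) = max_{q ∈ U} Σ_{j=1}^L q(j) Z(j). Let f : ℝ^n × {1,…,L} → ℝ^n, and suppose there exist V : ℝ^n → ℝ and scalars b₁, b₂, b₃ > 0 such that for all x ∈ ℝ^n: b₁‖x‖² ≤ V(x) ≤ b₂‖x‖² and ρ(j ↦ V(f(x,j))) − V(x) ≤ −b₃‖x‖². Define W^V_0(x) := V(x) and W^V_{k+1}(x) := ρ(j ↦ W^V_k(f(x,j))). Then for every k ∈ ℕ and every x ∈ ℝ^n, W^V_k(x) ≤ (1 − b₃/b₂)^k V(x). -/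
/-- Iterated contraction bound for the nested risk with terminal cost `V`
(intermediate claim in the proof of Lemma 1 of the paper). -/
theorem stmt_7 (L n : ℕ) (hL : 1 ≤ L) (U : Set (Fin L → ℝ))
    (hU : U.Nonempty) (hUc : IsCompact U) (hUconv : Convex ℝ U)
    (hUsub : U ⊆ stdSimplex ℝ (Fin L))
    (ρ : (Fin L → ℝ) → ℝ)
    (hρ : ∀ Z : Fin L → ℝ, IsGreatest ((fun q => ∑ j, q j * Z j) '' U) (ρ Z))
    (f : (Fin n → ℝ) → Fin L → (Fin n → ℝ))
    (V : (Fin n → ℝ) → ℝ) (b₁ b₂ b₃ : ℝ)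
    (hb₁ : 0 < b₁) (hb₂ : 0 < b₂) (hb₃ : 0 < b₃)
    (hVlb : ∀ x, b₁ * (∑ i, x i ^ 2) ≤ V x)
    (hVub : ∀ x, V x ≤ b₂ * (∑ i, x i ^ 2))
    (hdec : ∀ x, ρ (fun j => V (f x j)) - V x ≤ -b₃ * (∑ i, x i ^ 2))
    (WV : ℕ → (Fin n → ℝ) → ℝ)
    (hWV0 : ∀ x, WV 0 x = V x)
    (hWVs : ∀ k x, WV (k + 1) x = ρ (fun j => WV k (f x j))) :
    ∀ (k : ℕ) (x : Fin n → ℝ), WV k x ≤ (1 - b₃ / b₂) ^ k * V x := by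
  set c : ℝ := 1 - b₃ / b₂ with hc
  have Snn : ∀ x : Fin n → ℝ, 0 ≤ ∑ i, x i ^ 2 := fun x =>
    Finset.sum_nonneg fun i _ => sq_nonneg _
  have Vnn : ∀ x, 0 ≤ V x := fun x =>
    le_trans (mul_nonneg hb₁.le (Snn x)) (hVlb x)
  have mono : ∀ Z Z' : Fin L → ℝ, (∀ j, Z j ≤ Z' j) → ρ Z ≤ ρ Z' := by
    intro Z Z' h
    obtain ⟨q, hqU, hq⟩ := (hρ Z).1
    calc ρ Z = ∑ j, q j * Z j := hq.symm
      _ ≤ ∑ j, q j * Z' j := Finset.sum_le_sum fun j _ =>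
          mul_le_mul_of_nonneg_left (h j) ((hUsub hqU).1 j)
      _ ≤ ρ Z' := (hρ Z').2 ⟨q, hqU, rfl⟩
  have scale : ∀ (a : ℝ) (Z : Fin L → ℝ), 0 ≤ a → ρ (fun j => a * Z j) ≤ a * ρ Z := by
    intro a Z ha
    obtain ⟨q, hqU, hq⟩ := (hρ (fun j => a * Z j)).1
    calc ρ (fun j => a * Z j) = ∑ j, q j * (a * Z j) := hq.symm
      _ = a * ∑ j, q j * Z j := by
          rw [Finset.mul_sum]; exact Finset.sum_congr rfl fun j _ => by ring
      _ ≤ a * ρ Z := mul_le_mul_of_nonneg_left ((hρ Z).2 ⟨q, hqU, rfl⟩) ha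
  have ρnn : ∀ Z : Fin L → ℝ, (∀ j, 0 ≤ Z j) → 0 ≤ ρ Z := by
    intro Z h
    obtain ⟨q, hqU, hq⟩ := (hρ Z).1
    rw [← hq]
    exact Finset.sum_nonneg fun j _ => mul_nonneg ((hUsub hqU).1 j) (h j)
  have key : ∀ x, ρ (fun j => V (f x j)) ≤ c * V x := by
    intro x
    have h1 := hdec x
    have h2 : b₃ / b₂ * V x ≤ b₃ * ∑ i, x i ^ 2 := by
      rw [div_mul_eq_mul_div, div_le_iff₀ hb₂]
      nlinarith [hVub x, hb₃.le]
    calc ρ (fun j => V (f x j)) ≤ V x - b₃ * ∑ i, x i ^ 2 := by linarith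
      _ ≤ V x - b₃ / b₂ * V x := by linarith
      _ = c * V x := by rw [hc]; ring
  rcases le_or_gt 0 c with hcnn | hcneg
  · intro k
    induction k with
    | zero => intro x; rw [hWV0 x, pow_zero, one_mul]
    | succ k ih =>
      intro x
      rw [hWVs k x]
      calc ρ (fun j => WV k (f x j))
          ≤ ρ (fun j => c ^ k * V (f x j)) := mono _ _ fun j => ih (f x j)
        _ ≤ c ^ k * ρ (fun j => V (f x j)) := scale _ _ (pow_nonneg hcnn k)
        _ ≤ c ^ k * (c * V x) :=
            mul_le_mul_of_nonneg_left (key x) (pow_nonneg hcnn k)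
        _ = c ^ (k + 1) * V x := by ring
  · -- degenerate case: c < 0 forces V ≡ 0 and WV k ≡ 0
    have hV0 : ∀ x, V x = 0 := by
      intro x
      have h0 : 0 ≤ ρ (fun j => V (f x j)) := ρnn _ fun j => Vnn (f x j)
      have hcv : 0 ≤ c * V x := le_trans h0 (key x)
      have : V x ≤ 0 := nonpos_of_mul_nonneg_right ?_ hcneg
      · exact le_antisymm this (Vnn x)
      · linarith [hcv]
    have hW0 : ∀ k x, WV k x = 0 := by
      intro k
      induction k with
      | zero => intro x; rw [hWV0 x, hV0 x]
      | succ k ih =>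
        intro x
        rw [hWVs k x]
        have hz : (fun j => WV k (f x j)) = fun _ => (0 : ℝ) := by
          funext j; exact ih (f x j)
        rw [hz]
        obtain ⟨q, hqU, hq⟩ := (hρ (fun _ => (0 : ℝ))).1
        rw [← hq]
        simp
    intro k x
    rw [hW0 k x, hV0 x, mul_zero]
end

section
/- Let L ≥ 1, let q_1,…,q_M ∈ Δ^L, let U := conv{q_1,…,q_M}, and let ρ(Z) = max_{q ∈ U} Σ_{j=1}^L q(j) Z(j). Let A_1,…,A_L ∈ ℝ^{n×n}, B_1,…,B_L ∈ ℝ^{n×m}, let Q ∈ ℝ^{n×n}, R ∈ ℝ^{m×m}, P ∈ ℝ^{n×n} be symmetric positive definite, and suppose there exists F ∈ ℝ^{m×n} such that for every l ∈ {1,…,M} the matrix Σ_{j=1}^L q_l(j)(A_j + B_j F)ᵀ P (A_j + B_j F) − P + FᵀRF + Q is negative semidefinite. Define V_0(x) := xᵀPx and V_{h+1}(x) := inf_{u ∈ ℝ^m} [xᵀQx + uᵀRu + ρ(j ↦ V_h(A_j x + B_j u))]. Then for every h ∈ ℕ and every x ∈ ℝ^n, V_{h+1}(x) ≤ V_h(x).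 -/
/-!
Along the linear feedback `u = F x` the LMI makes the terminal cost `xᵀPx` a control Lyapunov
function for the risk-averse cost: at every vertex `q_l`, hence (the bound being linear in `q`) at
every point of the hull, the one-step cost plus expected terminal cost is at most `xᵀPx`. This gives
`V₁ ≤ V₀`. The Bellman operator is monotone on nonnegative functions because `ρ` is, so the
inequality propagates to `V_{h+1} ≤ V_h`.
-/

open Matrix Set Finset

section RiskMeasure

variable {ι : Type*} [Fintype ι] {s : Set (ι → ℝ)} {ρ : (ι → ℝ) → ℝ}

theorem riskMeasure_le_of_forall_mem
    (hρ : ∀ Z, IsGreatest ((fun p => ∑ j, p j * Z j) '' convexHull ℝ s) (ρ Z))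
    {Z : ι → ℝ} {c : ℝ} (hc : ∀ p ∈ s, ∑ j, p j * Z j ≤ c) : ρ Z ≤ c := by
  obtain ⟨⟨p, hp, hpZ⟩, -⟩ := hρ Z
  rw [← hpZ]
  have hlin : IsLinearMap ℝ fun p : ι → ℝ => ∑ j, p j * Z j :=
    ⟨fun p p' => by simp only [Pi.add_apply, add_mul, sum_add_distrib],
      fun a p => by simp only [Pi.smul_apply, smul_eq_mul, mul_assoc, mul_sum]⟩
  exact convexHull_min hc (convex_halfSpace_le hlin c) hp

theorem riskMeasure_zero
    (hρ : ∀ Z, IsGreatest ((fun p => ∑ j, p j * Z j) '' convexHull ℝ s) (ρ Z)) : ρ 0 = 0 := by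
  obtain ⟨⟨p, -, hp⟩, -⟩ := hρ 0
  simpa using hp.symm

theorem riskMeasure_monotone
    (hρ : ∀ Z, IsGreatest ((fun p => ∑ j, p j * Z j) '' convexHull ℝ s) (ρ Z))
    (hs : s ⊆ stdSimplex ℝ ι) : Monotone ρ := by
  intro Z Z' hZ
  obtain ⟨⟨p, hp, hpZ⟩, -⟩ := hρ Z
  rw [← hpZ]
  have hp_nonneg := (convexHull_min hs (convex_stdSimplex ℝ ι) hp).1
  calc ∑ j, p j * Z j ≤ ∑ j, p j * Z' j :=
        sum_le_sum fun j _ => mul_le_mul_of_nonneg_left (hZ j) (hp_nonneg j)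
    _ ≤ ρ Z' := (hρ Z').2 ⟨p, hp, rfl⟩

end RiskMeasure

section QuadraticForm

variable {ι k n : Type*} [Fintype ι] [Fintype k] [Fintype n]

theorem dotProduct_transpose_mul_mul_mulVec {α : Type*} [CommSemiring α]
    (G : Matrix k n α) (P : Matrix k k α) (x : n → α) :
    x ⬝ᵥ ((Gᵀ * P * G) *ᵥ x) = (G *ᵥ x) ⬝ᵥ (P *ᵥ (G *ᵥ x)) := by
  rw [← mulVec_mulVec, ← mulVec_mulVec, dotProduct_mulVec, vecMul_transpose]

theorem dotProduct_sum_smul_mulVec (c : ι → ℝ) (N : ι → Matrix n n ℝ) (x : n → ℝ) :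
    x ⬝ᵥ ((∑ j, c j • N j) *ᵥ x) = ∑ j, c j * (x ⬝ᵥ (N j *ᵥ x)) := by
  simp only [sum_mulVec, dotProduct_sum, smul_mulVec, dotProduct_smul, smul_eq_mul]

theorem Matrix.PosSemidef.dotProduct_mulVec_self_nonneg {M : Matrix n n ℝ} (hM : M.PosSemidef)
    (x : n → ℝ) : 0 ≤ x ⬝ᵥ (M *ᵥ x) := by
  simpa using hM.dotProduct_mulVec_nonneg x

theorem sum_quadForm_add_le_of_lmi {m : Type*} [Fintype m] {c : ι → ℝ}
    {G : ι → Matrix n n ℝ} {P Q : Matrix n n ℝ} {R : Matrix m m ℝ} {F : Matrix m n ℝ}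
    (hlmi : (-((∑ j, c j • ((G j)ᵀ * P * G j)) - P + Fᵀ * R * F + Q)).PosSemidef)
    (x : n → ℝ) :
    ∑ j, c j * ((G j *ᵥ x) ⬝ᵥ (P *ᵥ (G j *ᵥ x))) + (F *ᵥ x) ⬝ᵥ (R *ᵥ (F *ᵥ x))
      + x ⬝ᵥ (Q *ᵥ x) ≤ x ⬝ᵥ (P *ᵥ x) := by
  have h := hlmi.dotProduct_mulVec_self_nonneg x
  simp only [neg_mulVec, add_mulVec, sub_mulVec, dotProduct_neg, dotProduct_add,
    dotProduct_sub, dotProduct_sum_smul_mulVec, dotProduct_transpose_mul_mul_mulVec] at h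
  linarith

end QuadraticForm

section Bellman

variable {ι n m : Type*} [Fintype n] [Fintype m]
  {Q : Matrix n n ℝ} {R : Matrix m m ℝ} {A : ι → Matrix n n ℝ} {B : ι → Matrix n m ℝ}
  {ρ : (ι → ℝ) → ℝ}

variable (Q R A B ρ) in
noncomputable def bellman (W : (n → ℝ) → ℝ) (x : n → ℝ) : ℝ :=
  ⨅ u : m → ℝ, (x ⬝ᵥ (Q *ᵥ x) + u ⬝ᵥ (R *ᵥ u) + ρ (fun j => W (A j *ᵥ x + B j *ᵥ u)))

theorem bellman_objective_nonneg (hQ : Q.PosSemidef) (hR : R.PosSemidef) (hρ : Monotone ρ)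
    (hρ0 : ρ 0 = 0) {W : (n → ℝ) → ℝ} (hW : 0 ≤ W) (x : n → ℝ) (u : m → ℝ) :
    0 ≤ x ⬝ᵥ (Q *ᵥ x) + u ⬝ᵥ (R *ᵥ u) + ρ (fun j => W (A j *ᵥ x + B j *ᵥ u)) := by
  have hρW : 0 ≤ ρ (fun j => W (A j *ᵥ x + B j *ᵥ u)) := hρ0 ▸ hρ fun _ => hW _
  have := hQ.dotProduct_mulVec_self_nonneg x
  have := hR.dotProduct_mulVec_self_nonneg u
  positivity

theorem bddBelow_bellman_objective (hQ : Q.PosSemidef) (hR : R.PosSemidef)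
    (hρ : Monotone ρ) (hρ0 : ρ 0 = 0) {W : (n → ℝ) → ℝ} (hW : 0 ≤ W) (x : n → ℝ) :
    BddBelow (range fun u : m → ℝ =>
      x ⬝ᵥ (Q *ᵥ x) + u ⬝ᵥ (R *ᵥ u) + ρ (fun j => W (A j *ᵥ x + B j *ᵥ u))) :=
  ⟨0, forall_mem_range.2 (bellman_objective_nonneg hQ hR hρ hρ0 hW x)⟩

theorem bellman_nonneg (hQ : Q.PosSemidef) (hR : R.PosSemidef) (hρ : Monotone ρ)
    (hρ0 : ρ 0 = 0) {W : (n → ℝ) → ℝ} (hW : 0 ≤ W) : 0 ≤ bellman Q R A B ρ W :=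
  fun x => le_ciInf (bellman_objective_nonneg hQ hR hρ hρ0 hW x)

theorem bellman_le (hQ : Q.PosSemidef) (hR : R.PosSemidef) (hρ : Monotone ρ)
    (hρ0 : ρ 0 = 0) {W : (n → ℝ) → ℝ} (hW : 0 ≤ W) (x : n → ℝ) (u : m → ℝ) :
    bellman Q R A B ρ W x ≤
      x ⬝ᵥ (Q *ᵥ x) + u ⬝ᵥ (R *ᵥ u) + ρ (fun j => W (A j *ᵥ x + B j *ᵥ u)) :=
  ciInf_le (bddBelow_bellman_objective hQ hR hρ hρ0 hW x) u

theorem bellman_mono (hQ : Q.PosSemidef) (hR : R.PosSemidef) (hρ : Monotone ρ)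
    (hρ0 : ρ 0 = 0) {W W' : (n → ℝ) → ℝ} (hW : 0 ≤ W) (hWW' : W ≤ W') :
    bellman Q R A B ρ W ≤ bellman Q R A B ρ W' := fun x =>
  ciInf_mono (bddBelow_bellman_objective hQ hR hρ hρ0 hW x) fun _ =>
    add_le_add_right (hρ fun _ => hWW' _) _

theorem bellman_quadForm_le_quadForm [Fintype ι] {M : Type*} {q : M → ι → ℝ}
    (hq : ∀ l, q l ∈ stdSimplex ℝ ι)
    (hρ : ∀ Z, IsGreatest ((fun p => ∑ j, p j * Z j) '' convexHull ℝ (range q)) (ρ Z))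
    {P : Matrix n n ℝ} (hQ : Q.PosSemidef) (hP : P.PosSemidef) (hR : R.PosSemidef)
    {F : Matrix m n ℝ}
    (hlmi : ∀ l, (-((∑ j, q l j • ((A j + B j * F)ᵀ * P * (A j + B j * F))) - P
      + Fᵀ * R * F + Q)).PosSemidef) (x : n → ℝ) :
    bellman Q R A B ρ (fun y => y ⬝ᵥ (P *ᵥ y)) x ≤ x ⬝ᵥ (P *ᵥ x) := by
  have hclosed : ∀ j, A j *ᵥ x + B j *ᵥ (F *ᵥ x) = (A j + B j * F) *ᵥ x := fun j => by
    rw [add_mulVec, mulVec_mulVec]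
  have hρ_le : ρ (fun j => ((A j + B j * F) *ᵥ x) ⬝ᵥ (P *ᵥ ((A j + B j * F) *ᵥ x)))
      ≤ x ⬝ᵥ (P *ᵥ x) - (F *ᵥ x) ⬝ᵥ (R *ᵥ (F *ᵥ x)) - x ⬝ᵥ (Q *ᵥ x) := by
    refine riskMeasure_le_of_forall_mem hρ ?_
    rintro _ ⟨l, rfl⟩
    have := sum_quadForm_add_le_of_lmi (hlmi l) x
    linarith
  calc bellman Q R A B ρ (fun y => y ⬝ᵥ (P *ᵥ y)) x
      ≤ x ⬝ᵥ (Q *ᵥ x) + (F *ᵥ x) ⬝ᵥ (R *ᵥ (F *ᵥ x))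
        + ρ (fun j => ((A j + B j * F) *ᵥ x) ⬝ᵥ (P *ᵥ ((A j + B j * F) *ᵥ x))) := by
        simpa only [hclosed] using bellman_le (A := A) (B := B) hQ hR
          (riskMeasure_monotone hρ (range_subset_iff.2 hq)) (riskMeasure_zero hρ)
          hP.dotProduct_mulVec_self_nonneg x (F *ᵥ x)
    _ ≤ x ⬝ᵥ (P *ᵥ x) := by linarith

end Bellman

theorem stmt_10_general (L n m M : ℕ)
    (q : Fin M → Fin L → ℝ) (hq : ∀ l, q l ∈ stdSimplex ℝ (Fin L))
    (ρ : (Fin L → ℝ) → ℝ)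
    (hρ : ∀ Z : Fin L → ℝ,
      IsGreatest ((fun qq => ∑ j, qq j * Z j) '' (convexHull ℝ (Set.range q))) (ρ Z))
    (A : Fin L → Matrix (Fin n) (Fin n) ℝ) (B : Fin L → Matrix (Fin n) (Fin m) ℝ)
    (Q P : Matrix (Fin n) (Fin n) ℝ) (R : Matrix (Fin m) (Fin m) ℝ)
    (hQ : Q.PosDef) (hP : P.PosDef) (hR : R.PosDef)
    (F : Matrix (Fin m) (Fin n) ℝ)
    (hlmi : ∀ l : Fin M,
      (-((∑ j, q l j • ((A j + B j * F)ᵀ * P * (A j + B j * F))) - P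
          + Fᵀ * R * F + Q)).PosSemidef)
    (V : ℕ → (Fin n → ℝ) → ℝ)
    (hV0 : ∀ x, V 0 x = x ⬝ᵥ (P *ᵥ x))
    (hVs : ∀ (h : ℕ) (x : Fin n → ℝ), V (h + 1) x =
      ⨅ u : Fin m → ℝ, (x ⬝ᵥ (Q *ᵥ x) + u ⬝ᵥ (R *ᵥ u)
        + ρ (fun j => V h (A j *ᵥ x + B j *ᵥ u)))) :
    ∀ (h : ℕ) (x : Fin n → ℝ), V (h + 1) x ≤ V h x := by
  have hρ_mono := riskMeasure_monotone hρ (Set.range_subset_iff.2 hq)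
  have hρ0 := riskMeasure_zero hρ
  have hV0' : V 0 = fun x => x ⬝ᵥ (P *ᵥ x) := funext hV0
  have hVs' : ∀ h, V (h + 1) = bellman Q R A B ρ (V h) := fun h => funext (hVs h)
  have hV_nonneg : ∀ h, 0 ≤ V h := by
    intro h
    induction h with
    | zero => exact hV0' ▸ hP.posSemidef.dotProduct_mulVec_self_nonneg
    | succ h ih => exact hVs' h ▸ bellman_nonneg hQ.posSemidef hR.posSemidef hρ_mono hρ0 ih
  suffices h_anti : ∀ h, V (h + 1) ≤ V h from h_anti
  intro h
  induction h with
  | zero =>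
    rw [hVs' 0, hV0']
    exact bellman_quadForm_le_quadForm hq hρ hQ.posSemidef hP.posSemidef hR.posSemidef hlmi
  | succ h ih =>
    calc V (h + 2) = bellman Q R A B ρ (V (h + 1)) := hVs' (h + 1)
      _ ≤ bellman Q R A B ρ (V h) :=
        bellman_mono hQ.posSemidef hR.posSemidef hρ_mono hρ0 (hV_nonneg (h + 1)) ih
      _ = V (h + 1) := (hVs' h).symm

/-- Monotone decrease of the dynamic-programming value functions of the
risk-averse optimal control problem under the terminal-cost LMI condition. -/
theorem stmt_10 (L n m M : ℕ) (hL : 1 ≤ L) (hM : 1 ≤ M)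
    (q : Fin M → Fin L → ℝ) (hq : ∀ l, q l ∈ stdSimplex ℝ (Fin L))
    (ρ : (Fin L → ℝ) → ℝ)
    (hρ : ∀ Z : Fin L → ℝ,
      IsGreatest ((fun qq => ∑ j, qq j * Z j) '' (convexHull ℝ (Set.range q))) (ρ Z))
    (A : Fin L → Matrix (Fin n) (Fin n) ℝ) (B : Fin L → Matrix (Fin n) (Fin m) ℝ)
    (Q P : Matrix (Fin n) (Fin n) ℝ) (R : Matrix (Fin m) (Fin m) ℝ)
    (hQ : Q.PosDef) (hP : P.PosDef) (hR : R.PosDef)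
    (F : Matrix (Fin m) (Fin n) ℝ)
    (hlmi : ∀ l : Fin M,
      (-((∑ j, q l j • ((A j + B j * F)ᵀ * P * (A j + B j * F))) - P
          + Fᵀ * R * F + Q)).PosSemidef)
    (V : ℕ → (Fin n → ℝ) → ℝ)
    (hV0 : ∀ x, V 0 x = x ⬝ᵥ (P *ᵥ x))
    (hVs : ∀ (h : ℕ) (x : Fin n → ℝ), V (h + 1) x =
      ⨅ u : Fin m → ℝ, (x ⬝ᵥ (Q *ᵥ x) + u ⬝ᵥ (R *ᵥ u)
        + ρ (fun j => V h (A j *ᵥ x + B j *ᵥ u)))) :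
    ∀ (h : ℕ) (x : Fin n → ℝ), V (h + 1) x ≤ V h x :=
  stmt_10_general L n m M q hq ρ hρ A B Q P R hQ hP hR F hlmi V hV0 hVs
end

section
/- Let L ≥ 1, let U ⊆ Δ^L be a nonempty compact convex set, and let ρ(Z) = max_{q ∈ U} Σ_{j=1}^L q(j) Z(j). Let A_1,…,A_L ∈ ℝ^{n×n}, B_1,…,B_L ∈ ℝ^{n×m}, let Q, R, P be symmetric positive definite, and define V_0(x) := xᵀPx, V_{h+1}(x) := inf_{u ∈ ℝ^m} [xᵀQx + uᵀRu + ρ(j ↦ V_h(A_j x + B_j u))]. Fix N ≥ 1 and let M_A := max over r ∈ {0,…,N} and over all index sequences j_0,…,j_{r−1} ∈ {1,…,L} of ‖A_{j_{r−1}} ⋯ A_{j_1} A_{j_0}‖₂² (with the empty product equal to the identity). Then for every x ∈ ℝ^n: 0 ≤ V_N(x) ≤ (N‖Q‖₂ + ‖P‖₂) · M_A · ‖x‖². -/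
/-!
Evaluating the zero control `u = 0` gives `V (h+1) y ≤ yᵀQy + ρ (j ↦ V h (A j y))`, and
`ρ Z ≤ maxⱼ Z j` because `ρ Z` is an average of `Z` under some probability vector. Unrolling this
along the zero-control dynamics from `x` only visits states `A_{j_{r-1}} ⋯ A_{j_0} x` with `r ≤ N`,
whose squared norm is at most `M_A ‖x‖²`; so each of the `N` stage costs contributes at most
`‖Q‖₂ M_A ‖x‖²` and the terminal cost at most `‖P‖₂ M_A ‖x‖²`.
-/

open Matrix

theorem sum_mul_le_of_mem_stdSimplex {ι : Type*} [Fintype ι] {q Z : ι → ℝ} {C : ℝ}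
    (hq : q ∈ stdSimplex ℝ ι) (hZ : ∀ j, Z j ≤ C) : ∑ j, q j * Z j ≤ C :=
  calc ∑ j, q j * Z j ≤ ∑ j, q j * C :=
        Finset.sum_le_sum fun j _ => mul_le_mul_of_nonneg_left (hZ j) (hq.1 j)
    _ = C := by rw [← Finset.sum_mul, hq.2, one_mul]

theorem sum_mul_nonneg_of_mem_stdSimplex {ι : Type*} [Fintype ι] {q Z : ι → ℝ}
    (hq : q ∈ stdSimplex ℝ ι) (hZ : ∀ j, 0 ≤ Z j) : 0 ≤ ∑ j, q j * Z j :=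
  Finset.sum_nonneg fun j _ => mul_nonneg (hq.1 j) (hZ j)

namespace Matrix

variable {σ : Type*} [Fintype σ] [DecidableEq σ]

theorem norm_toLp_mulVec_le (M : Matrix σ σ ℝ) (x : σ → ℝ) :
    ‖WithLp.toLp 2 (M *ᵥ x)‖ ≤ ‖toEuclideanCLM (𝕜 := ℝ) M‖ * ‖WithLp.toLp 2 x‖ :=
  (toEuclideanCLM (𝕜 := ℝ) M).le_opNorm (WithLp.toLp 2 x)

theorem dotProduct_mulVec_self_le (M : Matrix σ σ ℝ) (x : σ → ℝ) :
    x ⬝ᵥ (M *ᵥ x) ≤ ‖toEuclideanCLM (𝕜 := ℝ) M‖ * ‖WithLp.toLp 2 x‖ ^ 2 :=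
  calc x ⬝ᵥ (M *ᵥ x)
      = inner ℝ (WithLp.toLp 2 x) (toEuclideanCLM (𝕜 := ℝ) M (WithLp.toLp 2 x)) :=
        (inner_toEuclideanCLM M _ _).symm
    _ ≤ ‖WithLp.toLp 2 x‖ * (‖toEuclideanCLM (𝕜 := ℝ) M‖ * ‖WithLp.toLp 2 x‖) :=
        (real_inner_le_norm _ _).trans
          (mul_le_mul_of_nonneg_left (norm_toLp_mulVec_le M x) (norm_nonneg _))
    _ = ‖toEuclideanCLM (𝕜 := ℝ) M‖ * ‖WithLp.toLp 2 x‖ ^ 2 := by ring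

theorem dotProduct_mulVec_self_mulVec_le (M C : Matrix σ σ ℝ) {c : ℝ}
    (hC : ‖toEuclideanCLM (𝕜 := ℝ) C‖ ^ 2 ≤ c) (x : σ → ℝ) :
    (C *ᵥ x) ⬝ᵥ (M *ᵥ (C *ᵥ x)) ≤ ‖toEuclideanCLM (𝕜 := ℝ) M‖ * c * ‖WithLp.toLp 2 x‖ ^ 2 := by
  have hCx : ‖WithLp.toLp 2 (C *ᵥ x)‖ ^ 2 ≤ c * ‖WithLp.toLp 2 x‖ ^ 2 :=
    calc ‖WithLp.toLp 2 (C *ᵥ x)‖ ^ 2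
        ≤ (‖toEuclideanCLM (𝕜 := ℝ) C‖ * ‖WithLp.toLp 2 x‖) ^ 2 := by
          gcongr; exact norm_toLp_mulVec_le C x
      _ ≤ c * ‖WithLp.toLp 2 x‖ ^ 2 := by rw [mul_pow]; gcongr
  calc (C *ᵥ x) ⬝ᵥ (M *ᵥ (C *ᵥ x))
      ≤ ‖toEuclideanCLM (𝕜 := ℝ) M‖ * ‖WithLp.toLp 2 (C *ᵥ x)‖ ^ 2 :=
        dotProduct_mulVec_self_le M _
    _ ≤ ‖toEuclideanCLM (𝕜 := ℝ) M‖ * c * ‖WithLp.toLp 2 x‖ ^ 2 := by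
        rw [mul_assoc]; gcongr

end Matrix

section ValueFunction

variable {ι σ τ : Type*} [Fintype ι] [Fintype σ] [Fintype τ] {ρ : (ι → ℝ) → ℝ}
  {A : ι → Matrix σ σ ℝ} {B : ι → Matrix σ τ ℝ} {Q P : Matrix σ σ ℝ} {R : Matrix τ τ ℝ}
  {V : ℕ → (σ → ℝ) → ℝ}

theorem value_nonneg (hρ : ∀ Z, ∃ q ∈ stdSimplex ℝ ι, ∑ j, q j * Z j = ρ Z)
    (hQ : Q.PosSemidef) (hP : P.PosSemidef) (hR : R.PosSemidef)
    (hV0 : ∀ x, V 0 x = x ⬝ᵥ (P *ᵥ x))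
    (hVs : ∀ h x, V (h + 1) x =
      ⨅ u : τ → ℝ, (x ⬝ᵥ (Q *ᵥ x) + u ⬝ᵥ (R *ᵥ u) + ρ (fun j => V h (A j *ᵥ x + B j *ᵥ u))))
    (h : ℕ) (x : σ → ℝ) : 0 ≤ V h x := by
  induction h generalizing x with
  | zero => simpa [hV0] using hP.dotProduct_mulVec_nonneg x
  | succ h ih =>
    rw [hVs]
    refine le_ciInf fun u => ?_
    obtain ⟨q, hq, hqρ⟩ := hρ fun j => V h (A j *ᵥ x + B j *ᵥ u)
    have hρ_nonneg := hqρ ▸ sum_mul_nonneg_of_mem_stdSimplex hq fun j => ih _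
    have hQx : 0 ≤ x ⬝ᵥ (Q *ᵥ x) := by simpa using hQ.dotProduct_mulVec_nonneg x
    have hRu : 0 ≤ u ⬝ᵥ (R *ᵥ u) := by simpa using hR.dotProduct_mulVec_nonneg u
    linarith

theorem value_succ_le_zero_control (hρ : ∀ Z, ∃ q ∈ stdSimplex ℝ ι, ∑ j, q j * Z j = ρ Z)
    (hR : R.PosSemidef) {h : ℕ} (hVh : ∀ y, 0 ≤ V h y)
    (hVs : ∀ x, V (h + 1) x =
      ⨅ u : τ → ℝ, (x ⬝ᵥ (Q *ᵥ x) + u ⬝ᵥ (R *ᵥ u) + ρ (fun j => V h (A j *ᵥ x + B j *ᵥ u))))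
    (x : σ → ℝ) : V (h + 1) x ≤ x ⬝ᵥ (Q *ᵥ x) + ρ (fun j => V h (A j *ᵥ x)) := by
  have hbdd : BddBelow (Set.range fun u : τ → ℝ =>
      x ⬝ᵥ (Q *ᵥ x) + u ⬝ᵥ (R *ᵥ u) + ρ (fun j => V h (A j *ᵥ x + B j *ᵥ u))) := by
    refine ⟨x ⬝ᵥ (Q *ᵥ x), ?_⟩
    rintro _ ⟨u, rfl⟩
    obtain ⟨q, hq, hqρ⟩ := hρ fun j => V h (A j *ᵥ x + B j *ᵥ u)
    have hρ_nonneg := hqρ ▸ sum_mul_nonneg_of_mem_stdSimplex hq fun j => hVh _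
    have hRu : 0 ≤ u ⬝ᵥ (R *ᵥ u) := by simpa using hR.dotProduct_mulVec_nonneg u
    dsimp only
    linarith
  simpa [hVs] using ciInf_le hbdd 0

theorem value_mulVec_prod_le [DecidableEq σ]
    (hρ : ∀ Z, ∃ q ∈ stdSimplex ℝ ι, ∑ j, q j * Z j = ρ Z) (hR : R.PosSemidef)
    (hV0 : ∀ x, V 0 x = x ⬝ᵥ (P *ᵥ x))
    (hVs : ∀ h x, V (h + 1) x =
      ⨅ u : τ → ℝ, (x ⬝ᵥ (Q *ᵥ x) + u ⬝ᵥ (R *ᵥ u) + ρ (fun j => V h (A j *ᵥ x + B j *ᵥ u))))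
    (hV_nonneg : ∀ h y, 0 ≤ V h y) {N : ℕ} {MA : ℝ}
    (hMA : ∀ r ≤ N, ∀ js : Fin r → ι,
      ‖toEuclideanCLM (𝕜 := ℝ) ((List.ofFn fun i => A (js i)).prod)‖ ^ 2 ≤ MA)
    (x : σ → ℝ) (h r : ℕ) (hrh : r + h ≤ N) (js : Fin r → ι) :
    V h ((List.ofFn fun i => A (js i)).prod *ᵥ x) ≤
      (h * ‖toEuclideanCLM (𝕜 := ℝ) Q‖ + ‖toEuclideanCLM (𝕜 := ℝ) P‖) * MA *
        ‖WithLp.toLp 2 x‖ ^ 2 := by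
  induction h generalizing r with
  | zero =>
    simpa [hV0] using dotProduct_mulVec_self_mulVec_le P _ (hMA r (by omega) js) x
  | succ h ih =>
    set y := (List.ofFn fun i => A (js i)).prod *ᵥ x
    have hstep : ρ (fun j => V h (A j *ᵥ y)) ≤
        (h * ‖toEuclideanCLM (𝕜 := ℝ) Q‖ + ‖toEuclideanCLM (𝕜 := ℝ) P‖) * MA *
          ‖WithLp.toLp 2 x‖ ^ 2 := by
      obtain ⟨q, hq, hqρ⟩ := hρ fun j => V h (A j *ᵥ y)
      refine hqρ ▸ sum_mul_le_of_mem_stdSimplex hq fun j => ?_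
      simpa [List.ofFn_succ, ← mulVec_mulVec] using ih (r + 1) (by omega) (Fin.cons j js)
    calc V (h + 1) y ≤ y ⬝ᵥ (Q *ᵥ y) + ρ (fun j => V h (A j *ᵥ y)) :=
          value_succ_le_zero_control hρ hR (hV_nonneg h) (hVs h) y
      _ ≤ ‖toEuclideanCLM (𝕜 := ℝ) Q‖ * MA * ‖WithLp.toLp 2 x‖ ^ 2 +
            (h * ‖toEuclideanCLM (𝕜 := ℝ) Q‖ + ‖toEuclideanCLM (𝕜 := ℝ) P‖) * MA *
              ‖WithLp.toLp 2 x‖ ^ 2 :=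
          add_le_add (dotProduct_mulVec_self_mulVec_le Q _ (hMA r (by omega) js) x) hstep
      _ = _ := by push_cast; ring

end ValueFunction

theorem stmt_13_general (L n m : ℕ)
    (U : Set (Fin L → ℝ))
    (hUsub : U ⊆ stdSimplex ℝ (Fin L))
    (ρ : (Fin L → ℝ) → ℝ)
    (hρ : ∀ Z : Fin L → ℝ, IsGreatest ((fun q => ∑ j, q j * Z j) '' U) (ρ Z))
    (A : Fin L → Matrix (Fin n) (Fin n) ℝ) (B : Fin L → Matrix (Fin n) (Fin m) ℝ)
    (Q P : Matrix (Fin n) (Fin n) ℝ) (R : Matrix (Fin m) (Fin m) ℝ)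
    (hQ : Q.PosDef) (hP : P.PosDef) (hR : R.PosDef)
    (V : ℕ → (Fin n → ℝ) → ℝ)
    (hV0 : ∀ x, V 0 x = x ⬝ᵥ (P *ᵥ x))
    (hVs : ∀ (h : ℕ) (x : Fin n → ℝ), V (h + 1) x =
      ⨅ u : Fin m → ℝ, (x ⬝ᵥ (Q *ᵥ x) + u ⬝ᵥ (R *ᵥ u)
        + ρ (fun j => V h (A j *ᵥ x + B j *ᵥ u))))
    (N : ℕ) (MA : ℝ)
    (hMA : IsGreatest
      { t : ℝ | ∃ r : ℕ, r ≤ N ∧ ∃ js : Fin r → Fin L,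
          t = ‖Matrix.toEuclideanCLM (𝕜 := ℝ) ((List.ofFn fun i => A (js i)).prod)‖ ^ 2 }
      MA) :
    ∀ x : Fin n → ℝ, 0 ≤ V N x ∧
      V N x ≤ ((N : ℝ) * ‖Matrix.toEuclideanCLM (𝕜 := ℝ) Q‖
        + ‖Matrix.toEuclideanCLM (𝕜 := ℝ) P‖) * MA * (∑ i, x i ^ 2) := by
  intro x
  have hρ' : ∀ Z, ∃ q ∈ stdSimplex ℝ (Fin L), ∑ j, q j * Z j = ρ Z := fun Z =>
    let ⟨q, hqU, hqρ⟩ := (hρ Z).1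
    ⟨q, hUsub hqU, hqρ⟩
  have hV_nonneg := value_nonneg hρ' hQ.posSemidef hP.posSemidef hR.posSemidef hV0 hVs
  refine ⟨hV_nonneg N x, ?_⟩
  simpa [EuclideanSpace.real_norm_sq_eq] using
    value_mulVec_prod_le hρ' hR.posSemidef hV0 hVs hV_nonneg
      (fun r hr js => hMA.2 ⟨r, hr, js, rfl⟩) x N 0 (by simp) Fin.elim0

/-- Upper Lyapunov bound (equation (15) of the paper): the `N`-step risk-averse value
function satisfies `0 ≤ V_N(x) ≤ (N‖Q‖₂ + ‖P‖₂) M_A ‖x‖²`, where `‖·‖₂` is the spectral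
norm and `M_A` is the largest squared spectral norm of products of at most `N` of the
matrices `A_j`. -/
theorem stmt_13 (L n m : ℕ) (hL : 1 ≤ L)
    (U : Set (Fin L → ℝ))
    (hU : U.Nonempty) (hUc : IsCompact U) (hUconv : Convex ℝ U)
    (hUsub : U ⊆ stdSimplex ℝ (Fin L))
    (ρ : (Fin L → ℝ) → ℝ)
    (hρ : ∀ Z : Fin L → ℝ, IsGreatest ((fun q => ∑ j, q j * Z j) '' U) (ρ Z))
    (A : Fin L → Matrix (Fin n) (Fin n) ℝ) (B : Fin L → Matrix (Fin n) (Fin m) ℝ)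
    (Q P : Matrix (Fin n) (Fin n) ℝ) (R : Matrix (Fin m) (Fin m) ℝ)
    (hQ : Q.PosDef) (hP : P.PosDef) (hR : R.PosDef)
    (V : ℕ → (Fin n → ℝ) → ℝ)
    (hV0 : ∀ x, V 0 x = x ⬝ᵥ (P *ᵥ x))
    (hVs : ∀ (h : ℕ) (x : Fin n → ℝ), V (h + 1) x =
      ⨅ u : Fin m → ℝ, (x ⬝ᵥ (Q *ᵥ x) + u ⬝ᵥ (R *ᵥ u)
        + ρ (fun j => V h (A j *ᵥ x + B j *ᵥ u))))
    (N : ℕ) (hN : 1 ≤ N) (MA : ℝ)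
    (hMA : IsGreatest
      { t : ℝ | ∃ r : ℕ, r ≤ N ∧ ∃ js : Fin r → Fin L,
          t = ‖Matrix.toEuclideanCLM (𝕜 := ℝ) ((List.ofFn fun i => A (js i)).prod)‖ ^ 2 }
      MA) :
    ∀ x : Fin n → ℝ, 0 ≤ V N x ∧
      V N x ≤ ((N : ℝ) * ‖Matrix.toEuclideanCLM (𝕜 := ℝ) Q‖
        + ‖Matrix.toEuclideanCLM (𝕜 := ℝ) P‖) * MA * (∑ i, x i ^ 2) :=
  stmt_13_general L n m U hUsub ρ hρ A B Q P R hQ hP hR V hV0 hVs N MA hMA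
end

section
/- Let L ≥ 1, let q_1,…,q_M ∈ Δ^L, let U := conv{q_1,…,q_M}, and let ρ(Z) = max_{q ∈ U} Σ_{j=1}^L q(j) Z(j). Let A_1,…,A_L ∈ ℝ^{n×n}, B_1,…,B_L ∈ ℝ^{n×m}, let Q, R, P be symmetric positive definite, and suppose there exists F ∈ ℝ^{m×n} such that for every l ∈ {1,…,M} the matrix Σ_{j=1}^L q_l(j)(A_j + B_j F)ᵀ P (A_j + B_j F) − P + FᵀRF + Q is negative semidefinite. Define V_0(x) := xᵀPx, V_{h+1}(x) := inf_{u} [xᵀQx + uᵀRu + ρ(j ↦ V_h(A_j x + B_j u))]; fix N ≥ 1 and suppose π : ℝ^n → ℝ^m attains the infimum in the definition of V_N, i.e., V_N(x) = xᵀQx + π(x)ᵀRπ(x) + ρ(j ↦ V_{N−1}(A_j x + B_j π(x))) for all x. Define the closed-loop dynamics f(x,j) := A_j x + B_j π(x) and the nested risk W_0(x) := ‖x‖², W_{k+1}(x) := ρ(j ↦ W_k(f(x,j))). Then the closed-loop system is uniformly globally risk-sensitive exponentially stable: there exist c ≥ 0 and λ ∈ [0,1) such that W_k(x₀) ≤ c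 λ^k ‖x₀‖² for all x₀ ∈ ℝ^n and all k ∈ ℕ. -/
/-!
The LMI says that under the feedback `u = F x` the terminal cost `xᵀPx` dominates the stage cost
plus the next terminal cost at every vertex of the ambiguity polytope, hence in the worst case.
So one step of value iteration lowers `V₀`, and by monotonicity of the Bellman operator
`V_N ≤ V_{N-1} ≤ ⋯ ≤ V₀`. Therefore `V_N` is a risk-sensitive Lyapunov function of the closed
loop: `a‖x‖² ≤ xᵀQx ≤ V_N x ≤ xᵀPx ≤ b‖x‖²` and
`ρ(V_N ∘ f) ≤ ρ(V_{N-1} ∘ f) = V_N - (stage cost) ≤ (1 - a/b) V_N`.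
Monotonicity and positive homogeneity of `ρ` carry this contraction through the nested risk `W_k`.
-/

open Matrix

section QuadraticForm

variable {ι : Type*} [Fintype ι]

lemma isCompact_setOf_sum_sq_eq_one : IsCompact {y : ι → ℝ | ∑ i, y i ^ 2 = 1} := by
  refine Metric.isCompact_of_isClosed_isBounded (isClosed_eq (by fun_prop) continuous_const) ?_
  refine (Metric.isBounded_closedBall (x := 0) (r := 1)).subset fun y (hy : ∑ i, y i ^ 2 = 1) => ?_
  rw [mem_closedBall_zero_iff, pi_norm_le_iff_of_nonneg zero_le_one]
  intro i
  rw [Real.norm_eq_abs, ← sq_le_one_iff_abs_le_one, ← hy]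
  exact Finset.single_le_sum (fun k _ => sq_nonneg (y k)) (Finset.mem_univ i)

lemma exists_sum_sq_eq_one_dotProduct_mulVec_eq (Q : Matrix ι ι ℝ) {x : ι → ℝ} (hx : x ≠ 0) :
    ∃ y : ι → ℝ, ∑ i, y i ^ 2 = 1 ∧ x ⬝ᵥ (Q *ᵥ x) = (∑ i, x i ^ 2) * (y ⬝ᵥ (Q *ᵥ y)) := by
  have hsum : ∑ i, x i ^ 2 = x ⬝ᵥ x := by simp only [dotProduct, sq]
  have hpos : 0 < ∑ i, x i ^ 2 := by
    rw [hsum]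
    exact lt_of_le_of_ne (by simpa using dotProduct_self_star_nonneg x)
      (Ne.symm (mt dotProduct_self_eq_zero.mp hx))
  set t := √(∑ i, x i ^ 2)
  have ht : t ^ 2 = ∑ i, x i ^ 2 := Real.sq_sqrt hpos.le
  have ht0 : t ≠ 0 := (Real.sqrt_pos.mpr hpos).ne'
  refine ⟨t⁻¹ • x, ?_, ?_⟩
  · simp only [Pi.smul_apply, smul_eq_mul, mul_pow, ← Finset.mul_sum, ← ht]
    field_simp
  · rw [mulVec_smul, smul_dotProduct, dotProduct_smul, smul_eq_mul, smul_eq_mul, ← ht]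
    field_simp

lemma Matrix.PosDef.exists_pos_mul_sum_sq_le {Q : Matrix ι ι ℝ} (hQ : Q.PosDef) :
    ∃ a, 0 < a ∧ ∀ x : ι → ℝ, a * ∑ i, x i ^ 2 ≤ x ⬝ᵥ (Q *ᵥ x) := by
  obtain ⟨a, ha, haS⟩ := isCompact_setOf_sum_sq_eq_one.exists_forall_le'
    (f := fun y => y ⬝ᵥ (Q *ᵥ y)) (by fun_prop) (a := 0) fun y hy => by
      have hy0 : y ≠ 0 := by rintro rfl; simp at hy
      simpa using hQ.dotProduct_mulVec_pos hy0
  refine ⟨a, ha, fun x => ?_⟩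
  rcases eq_or_ne x 0 with rfl | hx
  · simp
  obtain ⟨y, hy, hxy⟩ := exists_sum_sq_eq_one_dotProduct_mulVec_eq Q hx
  rw [hxy, mul_comm a]
  exact mul_le_mul_of_nonneg_left (haS y hy) (by positivity)

lemma Matrix.exists_dotProduct_mulVec_le_mul_sum_sq (P : Matrix ι ι ℝ) :
    ∃ b, ∀ x : ι → ℝ, x ⬝ᵥ (P *ᵥ x) ≤ b * ∑ i, x i ^ 2 := by
  obtain ⟨b, hb⟩ := isCompact_setOf_sum_sq_eq_one.bddAbove_image
    (f := fun y => y ⬝ᵥ (P *ᵥ y)) (by fun_prop)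
  refine ⟨b, fun x => ?_⟩
  rcases eq_or_ne x 0 with rfl | hx
  · simp
  obtain ⟨y, hy, hxy⟩ := exists_sum_sq_eq_one_dotProduct_mulVec_eq P hx
  rw [hxy, mul_comm b]
  exact mul_le_mul_of_nonneg_left (hb ⟨y, hy, rfl⟩) (by positivity)

end QuadraticForm

section Lmi

variable {ι κ J : Type*} [Fintype ι] [Fintype κ] [Fintype J]

lemma dotProduct_mulVec_transpose_mul_mul (G : Matrix κ ι ℝ) (P : Matrix κ κ ℝ) (x : ι → ℝ) :
    x ⬝ᵥ ((Gᵀ * P * G) *ᵥ x) = (G *ᵥ x) ⬝ᵥ (P *ᵥ (G *ᵥ x)) := by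
  rw [← mulVec_mulVec, ← mulVec_mulVec, dotProduct_mulVec, vecMul_transpose]

lemma sum_mul_dotProduct_mulVec_le_of_posSemidef {A : J → Matrix ι ι ℝ} {B : J → Matrix ι κ ℝ}
    {P Q : Matrix ι ι ℝ} {R : Matrix κ κ ℝ} {F : Matrix κ ι ℝ} {w : J → ℝ}
    (h : (-((∑ j, w j • ((A j + B j * F)ᵀ * P * (A j + B j * F))) - P
      + Fᵀ * R * F + Q)).PosSemidef) (x : ι → ℝ) :
    x ⬝ᵥ (Q *ᵥ x) + (F *ᵥ x) ⬝ᵥ (R *ᵥ (F *ᵥ x))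
      + ∑ j, w j * ((A j *ᵥ x + B j *ᵥ (F *ᵥ x)) ⬝ᵥ (P *ᵥ (A j *ᵥ x + B j *ᵥ (F *ᵥ x))))
      ≤ x ⬝ᵥ (P *ᵥ x) := by
  have hx := h.dotProduct_mulVec_nonneg x
  simp only [star_trivial, neg_mulVec, add_mulVec, sub_mulVec, sum_mulVec, smul_mulVec,
    dotProduct_neg, dotProduct_add, dotProduct_sub, dotProduct_sum, dotProduct_smul, smul_eq_mul,
    dotProduct_mulVec_transpose_mul_mul] at hx
  simp only [← mulVec_mulVec] at hx
  linarith

end Lmi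

section MaxExpectation

variable {ι : Type*} [Fintype ι]

/-- For `U` a polytope in the probability simplex this is the paper's polytopic risk measure. -/
def IsMaxExpectation (U : Set (ι → ℝ)) (ρ : (ι → ℝ) → ℝ) : Prop :=
  ∀ Z, IsGreatest ((fun p => ∑ j, p j * Z j) '' U) (ρ Z)

namespace IsMaxExpectation

variable {U : Set (ι → ℝ)} {ρ : (ι → ℝ) → ℝ}

lemma exists_eq (hρ : IsMaxExpectation U ρ) (Z : ι → ℝ) : ∃ p ∈ U, ∑ j, p j * Z j = ρ Z :=
  (hρ Z).1

lemma le_apply (hρ : IsMaxExpectation U ρ) {p : ι → ℝ} (hp : p ∈ U) (Z : ι → ℝ) :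
    ∑ j, p j * Z j ≤ ρ Z :=
  (hρ Z).2 ⟨p, hp, rfl⟩

lemma mono (hU : U ⊆ stdSimplex ℝ ι) (hρ : IsMaxExpectation U ρ) {Z Z' : ι → ℝ}
    (h : Z ≤ Z') : ρ Z ≤ ρ Z' := by
  obtain ⟨p, hp, hpZ⟩ := hρ.exists_eq Z
  rw [← hpZ]
  calc ∑ j, p j * Z j ≤ ∑ j, p j * Z' j :=
        Finset.sum_le_sum fun j _ => mul_le_mul_of_nonneg_left (h j) ((hU hp).1 j)
    _ ≤ ρ Z' := hρ.le_apply hp Z'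

lemma nonneg (hU : U ⊆ stdSimplex ℝ ι) (hρ : IsMaxExpectation U ρ) {Z : ι → ℝ} (h : 0 ≤ Z) :
    0 ≤ ρ Z := by
  obtain ⟨p, hp, hpZ⟩ := hρ.exists_eq Z
  rw [← hpZ]
  exact Finset.sum_nonneg fun j _ => mul_nonneg ((hU hp).1 j) (h j)

lemma map_const_mul (hρ : IsMaxExpectation U ρ) {c : ℝ} (hc : 0 ≤ c) (Z : ι → ℝ) :
    ρ (fun j => c * Z j) = c * ρ Z := by
  have hsum (p : ι → ℝ) : ∑ j, p j * (c * Z j) = c * ∑ j, p j * Z j := by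
    rw [Finset.mul_sum]; exact Finset.sum_congr rfl fun j _ => by ring
  obtain ⟨p, hp, hpZ⟩ := hρ.exists_eq fun j => c * Z j
  obtain ⟨p', hp', hp'Z⟩ := hρ.exists_eq Z
  apply le_antisymm
  · rw [← hpZ, hsum]
    exact mul_le_mul_of_nonneg_left (hρ.le_apply hp Z) hc
  · rw [← hp'Z, ← hsum]
    exact hρ.le_apply hp' _

lemma le_of_forall_vertex {κ : Type*} {q : κ → ι → ℝ}
    (hρ : IsMaxExpectation (convexHull ℝ (Set.range q)) ρ)
    {Z : ι → ℝ} {c : ℝ} (h : ∀ l, ∑ j, q l j * Z j ≤ c) : ρ Z ≤ c := by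
  obtain ⟨p, hp, hpZ⟩ := hρ.exists_eq Z
  rw [← hpZ]
  have hconv : Convex ℝ {p : ι → ℝ | p ⬝ᵥ Z ≤ c} :=
    convex_halfSpace_le ((dotProductBilin ℝ ℝ).flip Z).isLinear c
  exact convexHull_min (Set.range_subset_iff.2 h) hconv hp

end IsMaxExpectation

end MaxExpectation

section ValueIteration

variable {X U ι : Type*} [Fintype ι] {S : Set (ι → ℝ)} {ρ : (ι → ℝ) → ℝ}
  {ℓ : X → U → ℝ} {g : X → U → ι → X} {V : ℕ → X → ℝ}

lemma valueIteration_nonneg (hS : S ⊆ stdSimplex ℝ ι) (hρ : IsMaxExpectation S ρ)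
    (hℓ : ∀ x u, 0 ≤ ℓ x u) (hV : ∀ h x, V (h + 1) x = ⨅ u, ℓ x u + ρ (fun j => V h (g x u j)))
    (hV₀ : 0 ≤ V 0) (h : ℕ) : 0 ≤ V h := by
  induction h with
  | zero => exact hV₀
  | succ h ih =>
    intro x
    rw [hV]
    exact Real.iInf_nonneg fun u => add_nonneg (hℓ x u) (hρ.nonneg hS fun j => ih _)

lemma valueIteration_le (hS : S ⊆ stdSimplex ℝ ι) (hρ : IsMaxExpectation S ρ)
    (hℓ : ∀ x u, 0 ≤ ℓ x u) (hV : ∀ h x, V (h + 1) x = ⨅ u, ℓ x u + ρ (fun j => V h (g x u j)))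
    {h : ℕ} (hVh : 0 ≤ V h) (x : X) (u : U) :
    V (h + 1) x ≤ ℓ x u + ρ (fun j => V h (g x u j)) := by
  rw [hV]
  refine ciInf_le ⟨0, ?_⟩ u
  rintro _ ⟨u, rfl⟩
  exact add_nonneg (hℓ x u) (hρ.nonneg hS fun j => hVh _)

lemma valueIteration_antitone (hS : S ⊆ stdSimplex ℝ ι) (hρ : IsMaxExpectation S ρ)
    (hℓ : ∀ x u, 0 ≤ ℓ x u) (hV : ∀ h x, V (h + 1) x = ⨅ u, ℓ x u + ρ (fun j => V h (g x u j)))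
    (hV₀ : 0 ≤ V 0) (hV₁ : V 1 ≤ V 0) : Antitone V := by
  have hnn := valueIteration_nonneg hS hρ hℓ hV hV₀
  refine antitone_nat_of_succ_le fun h => ?_
  induction h with
  | zero => exact hV₁
  | succ h ih =>
    intro x
    rw [hV (h + 1), hV h]
    refine ciInf_mono ⟨0, ?_⟩ fun u => add_le_add le_rfl (hρ.mono hS fun j => ih _)
    rintro _ ⟨u, rfl⟩
    exact add_nonneg (hℓ x u) (hρ.nonneg hS fun j => hnn _ _)

end ValueIteration

section Lyapunov

variable {X ι : Type*} [Fintype ι] {S : Set (ι → ℝ)} {ρ : (ι → ℝ) → ℝ}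
  {f : X → ι → X} {W : ℕ → X → ℝ}

lemma nestedRisk_le_of_contraction (hS : S ⊆ stdSimplex ℝ ι) (hρ : IsMaxExpectation S ρ)
    (hW : ∀ k x, W (k + 1) x = ρ (fun j => W k (f x j))) {Λ : X → ℝ} {c r : ℝ}
    (hc : 0 ≤ c) (hr : 0 ≤ r) (hΛ : ∀ x, ρ (fun j => Λ (f x j)) ≤ r * Λ x)
    (hW₀ : ∀ x, W 0 x ≤ c * Λ x) (k : ℕ) (x : X) : W k x ≤ c * r ^ k * Λ x := by
  induction k generalizing x with
  | zero => simpa using hW₀ x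
  | succ k ih =>
    have hck : 0 ≤ c * r ^ k := by positivity
    calc W (k + 1) x ≤ ρ (fun j => c * r ^ k * Λ (f x j)) := hW k x ▸ hρ.mono hS fun j => ih _
      _ = c * r ^ k * ρ (fun j => Λ (f x j)) := hρ.map_const_mul hck _
      _ ≤ c * r ^ k * (r * Λ x) := mul_le_mul_of_nonneg_left (hΛ x) hck
      _ = c * r ^ (k + 1) * Λ x := by ring

theorem exists_nestedRisk_le_of_lyapunov (hS : S ⊆ stdSimplex ℝ ι) (hρ : IsMaxExpectation S ρ)
    (hW : ∀ k x, W (k + 1) x = ρ (fun j => W k (f x j))) {Λ ν : X → ℝ} {a b : ℝ} (ha : 0 < a)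
    (hν : 0 ≤ ν) (hlow : ∀ x, a * ν x ≤ Λ x) (hup : ∀ x, Λ x ≤ b * ν x)
    (hdecr : ∀ x, ρ (fun j => Λ (f x j)) ≤ Λ x - a * ν x) (hW₀ : ∀ x, W 0 x = ν x) :
    ∃ c lam : ℝ, 0 ≤ c ∧ 0 ≤ lam ∧ lam < 1 ∧ ∀ x k, W k x ≤ c * lam ^ k * ν x := by
  set b' := max a b
  have hb' : 0 < b' := ha.trans_le (le_max_left a b)
  have hup' (x : X) : Λ x ≤ b' * ν x :=
    (hup x).trans (mul_le_mul_of_nonneg_right (le_max_right a b) (hν x))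
  have hr : 0 ≤ 1 - a / b' := sub_nonneg.2 ((div_le_one hb').2 (le_max_left a b))
  have hΛ (x : X) : ρ (fun j => Λ (f x j)) ≤ (1 - a / b') * Λ x := by
    have : a / b' * Λ x ≤ a * ν x := by
      rw [div_mul_eq_mul_div, div_le_iff₀ hb', mul_assoc, mul_comm (ν x)]
      exact mul_le_mul_of_nonneg_left (hup' x) ha.le
    linarith [hdecr x]
  refine ⟨a⁻¹ * b', 1 - a / b', by positivity, hr, by linarith [div_pos ha hb'],
    fun x k => ?_⟩
  have hW₀' (x : X) : W 0 x ≤ a⁻¹ * Λ x := by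
    rw [hW₀, le_inv_mul_iff₀ ha]; exact hlow x
  calc W k x ≤ a⁻¹ * (1 - a / b') ^ k * Λ x :=
        nestedRisk_le_of_contraction hS hρ hW (by positivity) hr hΛ hW₀' k x
    _ ≤ a⁻¹ * (1 - a / b') ^ k * (b' * ν x) :=
        mul_le_mul_of_nonneg_left (hup' x) (by positivity)
    _ = a⁻¹ * b' * (1 - a / b') ^ k * ν x := by ring

end Lyapunov

theorem stmt_14_general (L n m M : ℕ)
    (q : Fin M → Fin L → ℝ) (hq : ∀ l, q l ∈ stdSimplex ℝ (Fin L))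
    (ρ : (Fin L → ℝ) → ℝ)
    (hρ : ∀ Z : Fin L → ℝ,
      IsGreatest ((fun qq => ∑ j, qq j * Z j) '' (convexHull ℝ (Set.range q))) (ρ Z))
    (A : Fin L → Matrix (Fin n) (Fin n) ℝ) (B : Fin L → Matrix (Fin n) (Fin m) ℝ)
    (Q P : Matrix (Fin n) (Fin n) ℝ) (R : Matrix (Fin m) (Fin m) ℝ)
    (hQ : Q.PosDef) (hP : P.PosDef) (hR : R.PosDef)
    (F : Matrix (Fin m) (Fin n) ℝ)
    (hlmi : ∀ l : Fin M,
      (-((∑ j, q l j • ((A j + B j * F)ᵀ * P * (A j + B j * F))) - P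
          + Fᵀ * R * F + Q)).PosSemidef)
    (V : ℕ → (Fin n → ℝ) → ℝ)
    (hV0 : ∀ x, V 0 x = x ⬝ᵥ (P *ᵥ x))
    (hVs : ∀ (h : ℕ) (x : Fin n → ℝ), V (h + 1) x =
      ⨅ u : Fin m → ℝ, (x ⬝ᵥ (Q *ᵥ x) + u ⬝ᵥ (R *ᵥ u)
        + ρ (fun j => V h (A j *ᵥ x + B j *ᵥ u))))
    (N : ℕ)
    (π : (Fin n → ℝ) → (Fin m → ℝ))
    (hπ : ∀ x, V N x = x ⬝ᵥ (Q *ᵥ x) + (π x) ⬝ᵥ (R *ᵥ (π x))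
      + ρ (fun j => V (N - 1) (A j *ᵥ x + B j *ᵥ (π x))))
    (f : (Fin n → ℝ) → Fin L → (Fin n → ℝ))
    (hf : ∀ x j, f x j = A j *ᵥ x + B j *ᵥ (π x))
    (W : ℕ → (Fin n → ℝ) → ℝ)
    (hW0 : ∀ x, W 0 x = ∑ i, x i ^ 2)
    (hWs : ∀ k x, W (k + 1) x = ρ (fun j => W k (f x j))) :
    ∃ c lam : ℝ, 0 ≤ c ∧ 0 ≤ lam ∧ lam < 1 ∧
      ∀ (x₀ : Fin n → ℝ) (k : ℕ), W k x₀ ≤ c * lam ^ k * (∑ i, x₀ i ^ 2) := by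
  replace hρ : IsMaxExpectation (convexHull ℝ (Set.range q)) ρ := hρ
  have hU : convexHull ℝ (Set.range q) ⊆ stdSimplex ℝ (Fin L) :=
    convexHull_min (Set.range_subset_iff.2 hq) (convex_stdSimplex ℝ _)
  have hQ₀ (x : Fin n → ℝ) : 0 ≤ x ⬝ᵥ (Q *ᵥ x) := by
    simpa using hQ.posSemidef.dotProduct_mulVec_nonneg x
  have hR₀ (u : Fin m → ℝ) : 0 ≤ u ⬝ᵥ (R *ᵥ u) := by
    simpa using hR.posSemidef.dotProduct_mulVec_nonneg u
  have hℓ (x : Fin n → ℝ) (u : Fin m → ℝ) : 0 ≤ x ⬝ᵥ (Q *ᵥ x) + u ⬝ᵥ (R *ᵥ u) :=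
    add_nonneg (hQ₀ x) (hR₀ u)
  have hV₀ : 0 ≤ V 0 := fun x => by
    simpa [hV0] using hP.posSemidef.dotProduct_mulVec_nonneg x
  have hV₁ : V 1 ≤ V 0 := fun x => by
    have hvertex := hρ.le_of_forall_vertex fun l =>
      le_sub_iff_add_le'.2 (sum_mul_dotProduct_mulVec_le_of_posSemidef (hlmi l) x)
    calc V 1 x ≤ x ⬝ᵥ (Q *ᵥ x) + (F *ᵥ x) ⬝ᵥ (R *ᵥ (F *ᵥ x))
          + ρ (fun j => V 0 (A j *ᵥ x + B j *ᵥ (F *ᵥ x))) :=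
          valueIteration_le hU hρ hℓ hVs hV₀ x (F *ᵥ x)
      _ ≤ V 0 x := by simp only [hV0] at hvertex ⊢; linarith
  have hV := valueIteration_nonneg hU hρ hℓ hVs hV₀
  have hV_anti := valueIteration_antitone hU hρ hℓ hVs hV₀ hV₁
  obtain ⟨a, ha, haQ⟩ := hQ.exists_pos_mul_sum_sq_le
  obtain ⟨b, hbP⟩ := P.exists_dotProduct_mulVec_le_mul_sum_sq
  have hπ' (x : Fin n → ℝ) : x ⬝ᵥ (Q *ᵥ x) + ρ (fun j => V (N - 1) (f x j)) ≤ V N x := by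
    rw [hπ x]; simp only [hf]; linarith [hR₀ (π x)]
  refine exists_nestedRisk_le_of_lyapunov (Λ := V N) (b := b) hU hρ hWs ha (fun x => by positivity)
    (fun x => ?_) (fun x => ?_) (fun x => ?_) hW0
  · linarith [haQ x, hπ' x, hρ.nonneg hU fun j => hV (N - 1) (f x j)]
  · exact (hV_anti (Nat.zero_le N) x).trans (hV0 x ▸ hbP x)
  · calc ρ (fun j => V N (f x j)) ≤ ρ (fun j => V (N - 1) (f x j)) :=
          hρ.mono hU fun j => hV_anti (Nat.sub_le N 1) _
      _ ≤ V N x - a * ∑ i, x i ^ 2 := by linarith [haQ x, hπ' x]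

/-- Stochastic stability of the risk-averse MPC law (Theorem 3 of the paper):
under the vertex LMI terminal-cost condition, the closed loop under the `N`-step
risk-averse MPC control law `π` is uniformly globally risk-sensitive exponentially
stable. Here `‖x‖² = ∑ i, x i ^ 2` is the squared Euclidean norm. -/
theorem stmt_14 (L n m M : ℕ) (hL : 1 ≤ L) (hM : 1 ≤ M)
    (q : Fin M → Fin L → ℝ) (hq : ∀ l, q l ∈ stdSimplex ℝ (Fin L))
    (ρ : (Fin L → ℝ) → ℝ)
    (hρ : ∀ Z : Fin L → ℝ,
      IsGreatest ((fun qq => ∑ j, qq j * Z j) '' (convexHull ℝ (Set.range q))) (ρ Z))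
    (A : Fin L → Matrix (Fin n) (Fin n) ℝ) (B : Fin L → Matrix (Fin n) (Fin m) ℝ)
    (Q P : Matrix (Fin n) (Fin n) ℝ) (R : Matrix (Fin m) (Fin m) ℝ)
    (hQ : Q.PosDef) (hP : P.PosDef) (hR : R.PosDef)
    (F : Matrix (Fin m) (Fin n) ℝ)
    (hlmi : ∀ l : Fin M,
      (-((∑ j, q l j • ((A j + B j * F)ᵀ * P * (A j + B j * F))) - P
          + Fᵀ * R * F + Q)).PosSemidef)
    (V : ℕ → (Fin n → ℝ) → ℝ)
    (hV0 : ∀ x, V 0 x = x ⬝ᵥ (P *ᵥ x))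
    (hVs : ∀ (h : ℕ) (x : Fin n → ℝ), V (h + 1) x =
      ⨅ u : Fin m → ℝ, (x ⬝ᵥ (Q *ᵥ x) + u ⬝ᵥ (R *ᵥ u)
        + ρ (fun j => V h (A j *ᵥ x + B j *ᵥ u))))
    (N : ℕ) (hN : 1 ≤ N)
    (π : (Fin n → ℝ) → (Fin m → ℝ))
    (hπ : ∀ x, V N x = x ⬝ᵥ (Q *ᵥ x) + (π x) ⬝ᵥ (R *ᵥ (π x))
      + ρ (fun j => V (N - 1) (A j *ᵥ x + B j *ᵥ (π x))))
    (f : (Fin n → ℝ) → Fin L → (Fin n → ℝ))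
    (hf : ∀ x j, f x j = A j *ᵥ x + B j *ᵥ (π x))
    (W : ℕ → (Fin n → ℝ) → ℝ)
    (hW0 : ∀ x, W 0 x = ∑ i, x i ^ 2)
    (hWs : ∀ k x, W (k + 1) x = ρ (fun j => W k (f x j))) :
    ∃ c lam : ℝ, 0 ≤ c ∧ 0 ≤ lam ∧ lam < 1 ∧
      ∀ (x₀ : Fin n → ℝ) (k : ℕ), W k x₀ ≤ c * lam ^ k * (∑ i, x₀ i ^ 2) :=
  stmt_14_general L n m M q hq ρ hρ A B Q P R hQ hP hR F hlmi V hV0 hVs N π hπ f hf W hW0 hWs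
end

section
/- Let L ≥ 1, n, m ≥ 1, A_1,…,A_L ∈ ℝ^{n×n}, B_1,…,B_L ∈ ℝ^{n×m}, and let Q ∈ ℝ^{n×n}, R ∈ ℝ^{m×m} be symmetric positive definite. Let q_1,…,q_M ∈ Δ^L. Let Ā ∈ ℝ^{Ln×n} be the vertical stacking of A_1,…,A_L, let B̄ ∈ ℝ^{Ln×m} be the vertical stacking of B_1,…,B_L, and for each l let Σ_l := blockdiag(q_l(1)I_n,…,q_l(L)I_n) ∈ ℝ^{Ln×Ln}. Suppose there exist matrices Y ∈ ℝ^{m×n}, G ∈ ℝ^{n×n}, and symmetric positive definite Q̄ ∈ ℝ^{n×n} such that for every l ∈ {1,…,M} the symmetric block matrix [[I_L ⊗ Q̄, 0, 0, −Σ_l^{1/2}(ĀG + B̄Y)], [∗, R^{−1}, 0, −Y], [∗, ∗, I_n, −Q^{1/2}G], [∗, ∗, ∗, −Q̄ + G + Gᵀ]] is positive definite. Then G is invertible, and setting F := Y G^{−1} and P := Q̄^{−1} (which is symmetric positive definite), for every l ∈ {1,…,M} the matrix Σ_{j=1}^L q_l(j)(A_j + B_j F)ᵀ P (A_j + B_j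 F) − P + FᵀRF + Q is negative definite. -/
/-!
Two Schur complements, first with respect to `blockdiag(I_L ⊗ Q̄, R⁻¹)` and then with respect to
`I_n`, reduce the LMI to
`G + Gᵀ - Q̄ - ∑ⱼ q(j) VⱼᵀQ̄⁻¹Vⱼ - YᵀRY - GᵀQG ≻ 0`, where `Vⱼ = AⱼG + BⱼY`.
Hence `G + Gᵀ ≻ 0`, so `G` is invertible. Completing the square,
`GᵀQ̄⁻¹G - (G + Gᵀ - Q̄) = (G - Q̄)ᵀQ̄⁻¹(G - Q̄) ⪰ 0`, so the same matrix with `G + Gᵀ - Q̄` replaced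
by `GᵀQ̄⁻¹G` is still positive definite. As `Vⱼ = (Aⱼ + BⱼF)G` and `YᵀRY = (FG)ᵀR(FG)`, that matrix
is `GᵀNG`, where `F = YG⁻¹` and `N` is the matrix claimed to be positive definite.
-/

open Matrix
open scoped Kronecker

/-- The vertically stacked matrix `Ā = [A_1; …; A_L]`. -/
def stackMat {L n k : ℕ} (A : Fin L → Matrix (Fin n) (Fin k) ℝ) :
    Matrix (Fin L × Fin n) (Fin k) ℝ :=
  Matrix.of fun li j => A li.1 li.2 j

/-- The square root `Σ_l^{1/2}` of the block-diagonal matrix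
`Σ_l = blockdiag(q_l(1)I_n, …, q_l(L)I_n)`. -/
noncomputable def sigmaHalf {L : ℕ} (n : ℕ) (ql : Fin L → ℝ) :
    Matrix (Fin L × Fin n) (Fin L × Fin n) ℝ :=
  Matrix.diagonal fun li => Real.sqrt (ql li.1)

/-- The square root of a positive semidefinite matrix, as `Matrix.PosSemidef.sqrt` was
defined in Mathlib (Dec 2024); that definition has since been removed. -/
noncomputable def posSemidefSqrt {n : Type*} [Fintype n] [DecidableEq n]
    {A : Matrix n n ℝ} (hA : A.PosSemidef) : Matrix n n ℝ :=
  hA.1.eigenvectorUnitary * diagonal (Real.sqrt ∘ hA.1.eigenvalues) *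
    (star hA.1.eigenvectorUnitary : Matrix n n ℝ)

/-- The 4×4 symmetric block matrix of the paper's LMI (13), with blocks of sizes
`Ln, m, n, n`; the lower-left blocks are determined by symmetry. -/
noncomputable def bigLMI {L n m : ℕ}
    (A : Fin L → Matrix (Fin n) (Fin n) ℝ) (B : Fin L → Matrix (Fin n) (Fin m) ℝ)
    (Q : Matrix (Fin n) (Fin n) ℝ) (hQ : Q.PosDef) (R : Matrix (Fin m) (Fin m) ℝ)
    (ql : Fin L → ℝ) (Y : Matrix (Fin m) (Fin n) ℝ)
    (G Qbar : Matrix (Fin n) (Fin n) ℝ) :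
    Matrix (((Fin L × Fin n) ⊕ Fin m) ⊕ (Fin n ⊕ Fin n))
      (((Fin L × Fin n) ⊕ Fin m) ⊕ (Fin n ⊕ Fin n)) ℝ :=
  Matrix.fromBlocks
    (Matrix.fromBlocks ((1 : Matrix (Fin L) (Fin L) ℝ) ⊗ₖ Qbar) 0 0 R⁻¹)
    (Matrix.fromBlocks 0 (-(sigmaHalf n ql * (stackMat A * G + stackMat B * Y)))
      0 (-Y))
    (Matrix.fromBlocks 0 (-(sigmaHalf n ql * (stackMat A * G + stackMat B * Y)))
      0 (-Y))ᵀ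
    (Matrix.fromBlocks 1 (-(posSemidefSqrt hQ.posSemidef * G))
      (-(posSemidefSqrt hQ.posSemidef * G))ᵀ (-Qbar + G + Gᵀ))

open scoped MatrixOrder ComplexOrder

namespace Matrix

section RCLike

variable {m n 𝕜 : Type*} [Fintype m] [Fintype n] [DecidableEq m] [DecidableEq n] [RCLike 𝕜]

theorem PosDef.posDef_fromBlocks₁₁_iff {A : Matrix m m 𝕜} (hA : A.PosDef)
    (B : Matrix m n 𝕜) (D : Matrix n n 𝕜) :
    (fromBlocks A B Bᴴ D).PosDef ↔ (D - Bᴴ * A⁻¹ * B).PosDef := by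
  have := hA.isUnit.invertible
  have hdet : (fromBlocks A B Bᴴ D).det ≠ 0 ↔ (D - Bᴴ * A⁻¹ * B).det ≠ 0 := by
    rw [det_fromBlocks₁₁, invOf_eq_nonsing_inv, mul_ne_zero_iff, and_iff_right hA.det_pos.ne']
  constructor
  · intro h
    exact ((hA.fromBlocks₁₁ B D).1 h.posSemidef).posDef_iff_det_ne_zero.2 (hdet.1 h.det_pos.ne')
  · intro h
    exact ((hA.fromBlocks₁₁ B D).2 h.posSemidef).posDef_iff_det_ne_zero.2 (hdet.2 h.det_pos.ne')

theorem PosDef.fromBlocks_zero_zero {A : Matrix m m 𝕜} {D : Matrix n n 𝕜} (hA : A.PosDef)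
    (hD : D.PosDef) : (fromBlocks A 0 0 D).PosDef := by
  simpa using (hA.posDef_fromBlocks₁₁_iff (0 : Matrix m n 𝕜) D).2 (by simpa using hD)

theorem isUnit_det_of_posDef_add_conjTranspose {G : Matrix n n 𝕜} (h : (G + Gᴴ).PosDef) :
    IsUnit G.det := by
  rw [isUnit_iff_ne_zero]
  intro h0
  obtain ⟨v, hv, hGv⟩ := exists_mulVec_eq_zero_iff.mpr h0
  have := h.dotProduct_mulVec_pos hv
  rw [add_mulVec, dotProduct_add, hGv, dotProduct_zero, zero_add, dotProduct_mulVec,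
    vecMul_conjTranspose, star_star, hGv] at this
  simp at this

theorem PosDef.posSemidef_conjTranspose_mul_inv_mul_sub {P : Matrix n n 𝕜} (hP : P.PosDef)
    (G : Matrix n n 𝕜) : (Gᴴ * P⁻¹ * G - (G + Gᴴ - P)).PosSemidef := by
  have hPinv : P * P⁻¹ = 1 := mul_nonsing_inv P ((isUnit_iff_isUnit_det _).mp hP.isUnit)
  have hinvP : P⁻¹ * P = 1 := nonsing_inv_mul P ((isUnit_iff_isUnit_det _).mp hP.isUnit)
  convert hP.inv.posSemidef.conjTranspose_mul_mul_same (G - P) using 1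
  simp only [conjTranspose_sub, hP.1.eq, sub_mul, mul_sub, Matrix.mul_assoc, hinvP, hPinv,
    mul_one, one_mul]
  abel

end RCLike

theorem conjTranspose_fromBlocks_zero_mul_fromBlocks_zero_mul {l₁ l₂ k₁ k₂ α : Type*}
    [Fintype l₁] [Fintype l₂] [Ring α] [StarRing α]
    (X : Matrix l₁ k₂ α) (Z : Matrix l₂ k₂ α) (P : Matrix l₁ l₁ α) (S : Matrix l₂ l₂ α) :
    (fromBlocks (0 : Matrix l₁ k₁ α) X 0 Z)ᴴ * fromBlocks P 0 0 S * fromBlocks 0 X 0 Z =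
      fromBlocks (0 : Matrix k₁ k₁ α) 0 0 (Xᴴ * P * X + Zᴴ * S * Z) := by
  simp [fromBlocks_conjTranspose, fromBlocks_multiply]

theorem posSemidefSqrt_eq_sqrt {n : Type*} [Fintype n] [DecidableEq n] {A : Matrix n n ℝ}
    (hA : A.PosSemidef) : posSemidefSqrt hA = CFC.sqrt A := by
  rw [CFC.sqrt_eq_real_sqrt A hA.nonneg, cfcₙ_eq_cfc, hA.1.cfc_eq]
  rfl

theorem transpose_posSemidefSqrt_mul_mul_self {m n : Type*} [Fintype n] [DecidableEq n]
    {A : Matrix n n ℝ} (hA : A.PosSemidef) (G : Matrix n m ℝ) :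
    (posSemidefSqrt hA * G)ᵀ * (posSemidefSqrt hA * G) = Gᵀ * A * G := by
  rw [posSemidefSqrt_eq_sqrt, transpose_mul, ← conjTranspose_eq_transpose_of_trivial (CFC.sqrt A),
    (CFC.sqrt_nonneg A).posSemidef.1.eq, Matrix.mul_assoc, ← Matrix.mul_assoc (CFC.sqrt A),
    CFC.sqrt_mul_sqrt_self A hA.nonneg, Matrix.mul_assoc]

theorem posSemidef_sum_smul_transpose_mul_mul {ι n k : Type*} [Fintype ι] [Fintype n]
    [Fintype k] {P : Matrix n n ℝ} (hP : P.PosSemidef) {w : ι → ℝ} (hw : ∀ j, 0 ≤ w j)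
    (V : ι → Matrix n k ℝ) : (∑ j, w j • ((V j)ᵀ * P * V j)).PosSemidef :=
  posSemidef_sum _ fun j _ => by
    simpa only [conjTranspose_eq_transpose_of_trivial] using
      (hP.conjTranspose_mul_mul_same (V j)).smul (hw j)

end Matrix

section StackedSystem

variable {L n : ℕ}

theorem stackMat_mul_add_mul {m : ℕ} (A : Fin L → Matrix (Fin n) (Fin n) ℝ)
    (B : Fin L → Matrix (Fin n) (Fin m) ℝ) (G : Matrix (Fin n) (Fin n) ℝ)
    (Y : Matrix (Fin m) (Fin n) ℝ) :
    stackMat A * G + stackMat B * Y = stackMat fun j => A j * G + B j * Y := by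
  ext ⟨i, a⟩ b
  simp [stackMat, mul_apply]

theorem sigmaHalf_mul_stackMat {k : ℕ} (ql : Fin L → ℝ) (V : Fin L → Matrix (Fin n) (Fin k) ℝ) :
    sigmaHalf n ql * stackMat V = stackMat fun j => √(ql j) • V j := by
  ext ⟨i, a⟩ b
  simp [sigmaHalf, stackMat]

theorem transpose_stackMat_mul_one_kronecker_mul_stackMat {k : ℕ}
    (P : Matrix (Fin n) (Fin n) ℝ) (V W : Fin L → Matrix (Fin n) (Fin k) ℝ) :
    (stackMat V)ᵀ * ((1 : Matrix (Fin L) (Fin L) ℝ) ⊗ₖ P) * stackMat W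
      = ∑ j, (V j)ᵀ * P * W j := by
  ext a b
  simp only [stackMat, mul_apply, Fintype.sum_prod_type, Matrix.sum_apply, one_apply,
    kroneckerMap_apply, transpose_apply, of_apply, Finset.sum_mul]
  refine Finset.sum_congr rfl fun j _ => ?_
  rw [Finset.sum_comm]
  simp [ite_mul, mul_ite, Finset.sum_ite_irrel]

theorem transpose_sigmaHalf_stackMat_mul_one_kronecker_mul {k : ℕ} {ql : Fin L → ℝ}
    (hql : ∀ j, 0 ≤ ql j) (P : Matrix (Fin n) (Fin n) ℝ) (V : Fin L → Matrix (Fin n) (Fin k) ℝ) :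
    (sigmaHalf n ql * stackMat V)ᵀ * ((1 : Matrix (Fin L) (Fin L) ℝ) ⊗ₖ P) *
        (sigmaHalf n ql * stackMat V) = ∑ j, ql j • ((V j)ᵀ * P * V j) := by
  rw [sigmaHalf_mul_stackMat, transpose_stackMat_mul_one_kronecker_mul_stackMat]
  refine Finset.sum_congr rfl fun j _ => ?_
  simp only [transpose_smul, Matrix.smul_mul, Matrix.mul_smul, smul_smul,
    Real.mul_self_sqrt (hql j)]

end StackedSystem

theorem posDef_schur_of_bigLMI {L n m : ℕ} {A : Fin L → Matrix (Fin n) (Fin n) ℝ}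
    {B : Fin L → Matrix (Fin n) (Fin m) ℝ} {Q : Matrix (Fin n) (Fin n) ℝ} (hQ : Q.PosDef)
    {R : Matrix (Fin m) (Fin m) ℝ} (hR : R.PosDef) {ql : Fin L → ℝ} (hql : ∀ j, 0 ≤ ql j)
    {Y : Matrix (Fin m) (Fin n) ℝ} {G Qbar : Matrix (Fin n) (Fin n) ℝ} (hQbar : Qbar.PosDef)
    (h : (bigLMI A B Q hQ R ql Y G Qbar).PosDef) :
    (-Qbar + G + Gᵀ - (∑ j, ql j • ((A j * G + B j * Y)ᵀ * Qbar⁻¹ * (A j * G + B j * Y))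
      + Yᵀ * R * Y) - Gᵀ * Q * G).PosDef := by
  have hD : (fromBlocks ((1 : Matrix (Fin L) (Fin L) ℝ) ⊗ₖ Qbar) 0 0 R⁻¹).PosDef :=
    (PosDef.one.kronecker hQbar).fromBlocks_zero_zero hR.inv
  have hDinv : (fromBlocks ((1 : Matrix (Fin L) (Fin L) ℝ) ⊗ₖ Qbar) 0 0 R⁻¹)⁻¹ =
      fromBlocks ((1 : Matrix (Fin L) (Fin L) ℝ) ⊗ₖ Qbar⁻¹) 0 0 R := by
    rw [inv_fromBlocks_zero₂₁_of_isUnit_iff _ _ _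
        (iff_of_true (PosDef.one.kronecker hQbar).isUnit hR.inv.isUnit), inv_kronecker, inv_one,
      nonsing_inv_nonsing_inv _ ((isUnit_iff_isUnit_det _).mp hR.isUnit)]
    simp
  unfold bigLMI at h
  simp only [← conjTranspose_eq_transpose_of_trivial] at h
  have h1 := (hD.posDef_fromBlocks₁₁_iff _ _).1 h
  rw [hDinv, conjTranspose_fromBlocks_zero_mul_fromBlocks_zero_mul, sub_eq_add_neg,
    fromBlocks_neg, fromBlocks_add] at h1
  simp only [neg_zero, add_zero, ← sub_eq_add_neg] at h1
  have h2 := (PosDef.one.posDef_fromBlocks₁₁_iff _ _).1 h1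
  simpa only [inv_one, Matrix.mul_one, conjTranspose_neg, transpose_neg, Matrix.neg_mul,
    Matrix.mul_neg, neg_neg, conjTranspose_eq_transpose_of_trivial,
    transpose_posSemidefSqrt_mul_mul_self, stackMat_mul_add_mul,
    transpose_sigmaHalf_stackMat_mul_one_kronecker_mul hql] using h2

theorem transpose_mul_neg_terminalCost_mul {ι n m : Type*} [Fintype ι] [Fintype n] [Fintype m]
    (A : ι → Matrix n n ℝ) (B : ι → Matrix n m ℝ) (w : ι → ℝ) (P Q : Matrix n n ℝ)
    (R : Matrix m m ℝ) {F : Matrix m n ℝ} {G : Matrix n n ℝ} {Y : Matrix m n ℝ}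
    (hFG : F * G = Y) :
    Gᵀ * -(∑ j, w j • ((A j + B j * F)ᵀ * P * (A j + B j * F)) - P + Fᵀ * R * F + Q) * G =
      Gᵀ * P * G - ∑ j, w j • ((A j * G + B j * Y)ᵀ * P * (A j * G + B j * Y)) - Yᵀ * R * Y
        - Gᵀ * Q * G := by
  subst hFG
  have hcl : ∀ j, A j * G + B j * (F * G) = (A j + B j * F) * G := fun j => by
    rw [Matrix.add_mul, Matrix.mul_assoc]
  simp only [hcl, transpose_mul]
  simp only [Matrix.mul_neg, Matrix.neg_mul, Matrix.mul_add, Matrix.add_mul, Matrix.mul_sub,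
    Matrix.sub_mul, Finset.mul_sum, Finset.sum_mul, Matrix.mul_smul, Matrix.smul_mul,
    Matrix.mul_assoc]
  abel

theorem stmt_15_general (L n m M : ℕ) (hM : 1 ≤ M)
    (A : Fin L → Matrix (Fin n) (Fin n) ℝ) (B : Fin L → Matrix (Fin n) (Fin m) ℝ)
    (Q : Matrix (Fin n) (Fin n) ℝ) (R : Matrix (Fin m) (Fin m) ℝ)
    (hQ : Q.PosDef) (hR : R.PosDef)
    (q : Fin M → Fin L → ℝ) (hq : ∀ l, q l ∈ stdSimplex ℝ (Fin L))
    (Y : Matrix (Fin m) (Fin n) ℝ) (G : Matrix (Fin n) (Fin n) ℝ)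
    (Qbar : Matrix (Fin n) (Fin n) ℝ) (hQbar : Qbar.PosDef)
    (hlmi : ∀ l : Fin M, (bigLMI A B Q hQ R (q l) Y G Qbar).PosDef) :
    IsUnit G.det ∧ (Qbar⁻¹).PosDef ∧ ∀ l : Fin M,
      (-((∑ j, q l j • ((A j + B j * (Y * G⁻¹))ᵀ * Qbar⁻¹ * (A j + B j * (Y * G⁻¹))))
          - Qbar⁻¹ + (Y * G⁻¹)ᵀ * R * (Y * G⁻¹) + Q)).PosDef := by
  have hschur l := posDef_schur_of_bigLMI hQ hR (hq l).1 hQbar (hlmi l)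
  have hcost l := posSemidef_sum_smul_transpose_mul_mul hQbar.inv.posSemidef (hq l).1
    fun j => A j * G + B j * Y
  have hYRY : (Yᵀ * R * Y).PosSemidef := by
    simpa only [conjTranspose_eq_transpose_of_trivial] using
      hR.posSemidef.conjTranspose_mul_mul_same Y
  have hGQG : (Gᵀ * Q * G).PosSemidef := by
    simpa only [conjTranspose_eq_transpose_of_trivial] using
      hQ.posSemidef.conjTranspose_mul_mul_same G
  have hGGt : (G + Gᵀ).PosDef := by
    convert (hschur ⟨0, hM⟩).add_posSemidef
      ((hQbar.posSemidef.add ((hcost ⟨0, hM⟩).add hYRY)).add hGQG) using 1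
    abel
  have hG : IsUnit G.det :=
    isUnit_det_of_posDef_add_conjTranspose (by rwa [conjTranspose_eq_transpose_of_trivial])
  refine ⟨hG, hQbar.inv, fun l => ?_⟩
  refine ((isUnit_iff_isUnit_det G).mpr hG).posDef_star_left_conjugate_iff.1 ?_
  rw [star_eq_conjTranspose, conjTranspose_eq_transpose_of_trivial,
    transpose_mul_neg_terminalCost_mul A B (q l) _ _ R (nonsing_inv_mul_cancel_right _ _ hG)]
  convert (hschur l).add_posSemidef (hQbar.posSemidef_conjTranspose_mul_inv_mul_sub G) using 1
  rw [conjTranspose_eq_transpose_of_trivial]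
  abel

/-- One direction of the LMI characterization (Theorem 4 of the paper): feasibility of
the LMI (13) implies invertibility of `G` and, with `F = YG⁻¹` and `P = Q̄⁻¹`,
negative definiteness of the terminal-cost condition (11). -/
theorem stmt_15 (L n m M : ℕ) (hL : 1 ≤ L) (hn : 1 ≤ n) (hm : 1 ≤ m) (hM : 1 ≤ M)
    (A : Fin L → Matrix (Fin n) (Fin n) ℝ) (B : Fin L → Matrix (Fin n) (Fin m) ℝ)
    (Q : Matrix (Fin n) (Fin n) ℝ) (R : Matrix (Fin m) (Fin m) ℝ)
    (hQ : Q.PosDef) (hR : R.PosDef)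
    (q : Fin M → Fin L → ℝ) (hq : ∀ l, q l ∈ stdSimplex ℝ (Fin L))
    (Y : Matrix (Fin m) (Fin n) ℝ) (G : Matrix (Fin n) (Fin n) ℝ)
    (Qbar : Matrix (Fin n) (Fin n) ℝ) (hQbar : Qbar.PosDef)
    (hlmi : ∀ l : Fin M, (bigLMI A B Q hQ R (q l) Y G Qbar).PosDef) :
    IsUnit G.det ∧ (Qbar⁻¹).PosDef ∧ ∀ l : Fin M,
      (-((∑ j, q l j • ((A j + B j * (Y * G⁻¹))ᵀ * Qbar⁻¹ * (A j + B j * (Y * G⁻¹))))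
          - Qbar⁻¹ + (Y * G⁻¹)ᵀ * R * (Y * G⁻¹) + Q)).PosDef :=
  stmt_15_general L n m M hM A B Q R hQ hR q hq Y G Qbar hQbar hlmi
end
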